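/- arXiv:1112.0883 — 14 statements merged into one kernel-verified Lean document; each statement's English description precedes it below -/
import Mathlib

section
/- If X is a topological space with wee(X) = ω, F is a closed subset of X², and 𝒰 is a cover of F by open subsets of X², then there is a countable subset A of X such that F ⊆ St(X × A, 𝒰). -/
open Set Topology

universe u

namespace DiagonalPaper

/-- The star of a set `A` with respect to a family `𝒰`:
the union of all members of `𝒰` meeting `A`. -/
def st {X : Type u} (A : Set X) (𝒰 : Set (Set X)) : Set X :=
  ⋃₀ {U | U ∈ 𝒰 ∧ (U ∩ A).Nonempty}

/-- Iterated star `Stⁿ(A, 𝒰)`. -/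
def stn {X : Type u} (n : ℕ) (A : Set X) (𝒰 : Set (Set X)) : Set X :=
  (fun B => st B 𝒰)^[n] A

/-- `𝒰` is an open cover of the space `X`. -/
def IsOpenCover {X : Type u} [TopologicalSpace X] (𝒰 : Set (Set X)) : Prop :=
  (∀ U ∈ 𝒰, IsOpen U) ∧ ⋃₀ 𝒰 = Set.univ

/-- The weak extent of `X` (by convention at least `ℵ₀`): the least `κ` such that every
open cover `𝒰` of `X` admits `A ⊆ X` with `|A| ≤ κ` and `St(A, 𝒰) = X`. -/
noncomputable def weakExtent (X : Type u) [TopologicalSpace X] : Cardinal.{u} :=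
  Cardinal.aleph0 ⊔ sInf {κ | ∀ 𝒰 : Set (Set X), IsOpenCover 𝒰 →
    ∃ A : Set X, Cardinal.mk ↥A ≤ κ ∧ st A 𝒰 = Set.univ}

/-- The weak double extent of `X` (by convention at least `ℵ₀`): the least `κ` such that
every open cover `𝒰` of `X²` admits `A ⊆ X` with `|A| ≤ κ` and `St(X × A, 𝒰) = X²`. -/
noncomputable def weakDoubleExtent (X : Type u) [TopologicalSpace X] : Cardinal.{u} :=
  Cardinal.aleph0 ⊔ sInf {κ | ∀ 𝒰 : Set (Set (X × X)), IsOpenCover 𝒰 →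
    ∃ A : Set X, Cardinal.mk ↥A ≤ κ ∧ st (Set.univ ×ˢ A) 𝒰 = Set.univ}

/-- if `wee(X) = ω`, `F ⊆ X²` is closed and `𝒰` is a cover of `F` by open
subsets of `X²`, then there is a countable `A ⊆ X` with `F ⊆ St(X × A, 𝒰)`. -/
theorem closed_subset_star_of_weakDoubleExtent_eq_aleph0
    (X : Type u) [TopologicalSpace X]
    (hwee : weakDoubleExtent X = Cardinal.aleph0)
    (F : Set (X × X)) (hF : IsClosed F)
    (𝒰 : Set (Set (X × X))) (h𝒰 : ∀ U ∈ 𝒰, IsOpen U) (hcov : F ⊆ ⋃₀ 𝒰) :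
    ∃ A : Set X, A.Countable ∧ F ⊆ st (Set.univ ×ˢ A) 𝒰 := by
  set S : Set Cardinal.{u} := {κ | ∀ 𝒰 : Set (Set (X × X)), IsOpenCover 𝒰 →
    ∃ A : Set X, Cardinal.mk ↥A ≤ κ ∧ st (Set.univ ×ˢ A) 𝒰 = Set.univ} with hS
  have hne : S.Nonempty := by
    refine ⟨Cardinal.mk (X × X), fun 𝒱 h𝒱 => ⟨Set.univ, ?_, ?_⟩⟩
    · rw [Cardinal.mk_univ]
      exact Cardinal.mk_le_of_injective (f := fun x : X => (x, x))
        (fun a b hab => congrArg Prod.fst hab)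
    · ext x
      simp only [st, Set.mem_sUnion, Set.mem_setOf_eq, Set.mem_univ, iff_true]
      obtain ⟨U, hU, hxU⟩ := (h𝒱.2 ▸ Set.mem_univ x : x ∈ ⋃₀ 𝒱)
      exact ⟨U, ⟨hU, ⟨x, hxU, Set.mem_prod.2 ⟨trivial, trivial⟩⟩⟩, hxU⟩
  have hmem : sInf S ∈ S := csInf_mem hne
  have hle : sInf S ≤ Cardinal.aleph0 := by
    have := hwee
    rw [weakDoubleExtent, ← hS] at this
    calc sInf S ≤ Cardinal.aleph0 ⊔ sInf S := le_sup_right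
    _ = Cardinal.aleph0 := this
  set 𝒱 : Set (Set (X × X)) := insert Fᶜ 𝒰 with h𝒱def
  have hcover : IsOpenCover 𝒱 := by
    constructor
    · rintro U (rfl | hU)
      · exact hF.isOpen_compl
      · exact h𝒰 U hU
    · apply Set.eq_univ_of_forall
      intro x
      by_cases hx : x ∈ F
      · obtain ⟨U, hU, hxU⟩ := hcov hx
        exact ⟨U, Set.mem_insert_of_mem _ hU, hxU⟩
      · exact ⟨Fᶜ, Set.mem_insert _ _, hx⟩
  obtain ⟨A, hA, hst⟩ := hmem 𝒱 hcover
  refine ⟨A, Cardinal.mk_le_aleph0_iff.mp (hA.trans hle), ?_⟩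
  intro x hx
  have : x ∈ st (Set.univ ×ˢ A) 𝒱 := hst ▸ Set.mem_univ x
  obtain ⟨U, ⟨hU, hmeet⟩, hxU⟩ := this
  rcases hU with rfl | hU
  · exact absurd hx hxU
  · exact ⟨U, ⟨hU, hmeet⟩, hxU⟩

end DiagonalPaper
end

section
/- If a topological space X has a zero-set diagonal and wee(X) = ω, then X is submetrizable. -/
open Set Topology

universe u

namespace DiagonalPaper

/-- `X` has a zero-set diagonal: a continuous `f : X² → [0,1]` with `f⁻¹(0) = Δ_X`. -/
def HasZeroSetDiagonal (X : Type u) [TopologicalSpace X] : Prop :=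
  ∃ f : X × X → ℝ, Continuous f ∧ (∀ p, f p ∈ Set.Icc (0 : ℝ) 1) ∧
    f ⁻¹' {0} = Set.diagonal X

/-- `X` is submetrizable: there is a continuous injection of `X` into a metrizable space. -/
def Submetrizable (X : Type u) [TopologicalSpace X] : Prop :=
  ∃ (Y : Type u) (tY : TopologicalSpace Y), @TopologicalSpace.MetrizableSpace Y tY ∧
    ∃ f : X → Y, @Continuous X Y _ tY f ∧ Function.Injective f

/-- The family of small-oscillation boxes used in the proof. -/
def smallBoxes {X : Type u} [TopologicalSpace X] (f : X × X → ℝ) (ε : ℝ) :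
    Set (Set (X × X)) :=
  {W : Set (X × X) | ∃ U V : Set X, IsOpen U ∧ IsOpen V ∧ W = U ×ˢ V ∧
    (∀ p ∈ U ×ˢ V, ∀ q ∈ U ×ˢ V, |f p - f q| < ε) ∧
    (∀ b ∈ V, ∀ c ∈ V, f (b, c) < ε)}

lemma smallBoxes_isOpenCover {X : Type u} [TopologicalSpace X] (f : X × X → ℝ)
    (hf : Continuous f) (h0 : ∀ x : X, f (x, x) = 0) {ε : ℝ} (hε : 0 < ε) :
    IsOpenCover (smallBoxes f ε) := by
  constructor
  · rintro W ⟨U, V, hU, hV, rfl, -, -⟩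
    exact hU.prod hV
  · apply Set.eq_univ_of_forall
    rintro ⟨x, y⟩
    have h1 : f ⁻¹' Metric.ball (f (x, y)) (ε / 2) ∈ 𝓝 (x, y) :=
      (Metric.isOpen_ball.preimage hf).mem_nhds
        (Set.mem_preimage.mpr (Metric.mem_ball_self (half_pos hε)))
    obtain ⟨U1, V1, hU1, hxU1, hV1, hyV1, hsub1⟩ := mem_nhds_prod_iff'.mp h1
    have h2 : f ⁻¹' Metric.ball 0 ε ∈ 𝓝 (y, y) := by
      apply (Metric.isOpen_ball.preimage hf).mem_nhds
      simp [Set.mem_preimage, Metric.mem_ball, h0 y, hε, dist_eq_norm]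
    obtain ⟨U2, V2, hU2, hyU2, hV2, hyV2', hsub2⟩ := mem_nhds_prod_iff'.mp h2
    refine Set.mem_sUnion.mpr ⟨U1 ×ˢ (V1 ∩ (U2 ∩ V2)),
      ⟨U1, V1 ∩ (U2 ∩ V2), hU1, hV1.inter (hU2.inter hV2), rfl, ?_, ?_⟩, ?_⟩
    · rintro p hp q hq
      have hp1 : p ∈ f ⁻¹' Metric.ball (f (x, y)) (ε / 2) :=
        hsub1 ⟨hp.1, hp.2.1⟩
      have hq1 : q ∈ f ⁻¹' Metric.ball (f (x, y)) (ε / 2) :=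
        hsub1 ⟨hq.1, hq.2.1⟩
      simp only [Set.mem_preimage, Metric.mem_ball, Real.dist_eq] at hp1 hq1
      calc |f p - f q| ≤ |f p - f (x, y)| + |f (x, y) - f q| := abs_sub_le _ _ _
        _ < ε / 2 + ε / 2 := by
            rw [abs_sub_comm (f (x, y)) (f q)]; exact add_lt_add hp1 hq1
        _ = ε := by ring
    · intro b hb c hc
      have : (b, c) ∈ f ⁻¹' Metric.ball 0 ε := hsub2 ⟨hb.2.1, hc.2.2⟩
      simp only [Set.mem_preimage, Metric.mem_ball, Real.dist_eq, sub_zero] at this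
      exact lt_of_le_of_lt (le_abs_self _) this
    · exact ⟨hxU1, hyV1, hyU2, hyV2'⟩

/-- a space with a zero-set diagonal and `wee(X) = ω` is submetrizable. -/
theorem submetrizable_of_zeroSetDiagonal_of_weakDoubleExtent_eq_aleph0
    (X : Type u) [TopologicalSpace X]
    (hz : HasZeroSetDiagonal X)
    (hwee : weakDoubleExtent X = Cardinal.aleph0) :
    Submetrizable X := by
  obtain ⟨f, hf, hf01, hfd⟩ := hz
  have h0 : ∀ x : X, f (x, x) = 0 := by
    intro x
    have : (x, x) ∈ f ⁻¹' {0} := by rw [hfd]; exact rfl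
    simpa using this
  -- extract countable star-sets from the weak double extent hypothesis
  set S : Set Cardinal.{u} := {κ | ∀ 𝒰 : Set (Set (X × X)), IsOpenCover 𝒰 →
    ∃ A : Set X, Cardinal.mk ↥A ≤ κ ∧ st (Set.univ ×ˢ A) 𝒰 = Set.univ} with hSdef
  have hSne : S.Nonempty := by
    refine ⟨Cardinal.mk X, fun 𝒰 h𝒰 => ⟨Set.univ, Cardinal.mk_set_le _, ?_⟩⟩
    rw [Set.eq_univ_iff_forall]
    intro p
    have hp : p ∈ ⋃₀ 𝒰 := by rw [h𝒰.2]; trivial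
    obtain ⟨U, hU, hpU⟩ := hp
    exact Set.mem_sUnion.mpr ⟨U, ⟨hU, ⟨p, hpU, by simp⟩⟩, hpU⟩
  have hmem : sInf S ∈ S := csInf_mem hSne
  have hle : sInf S ≤ Cardinal.aleph0 := by
    have := hwee
    rw [weakDoubleExtent, ← hSdef, sup_eq_left] at this
    exact this
  have hS : ∀ 𝒰 : Set (Set (X × X)), IsOpenCover 𝒰 →
      ∃ A : Set X, Cardinal.mk ↥A ≤ Cardinal.aleph0 ∧
        st (Set.univ ×ˢ A) 𝒰 = Set.univ := by
    intro 𝒰 h𝒰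
    obtain ⟨A, hA1, hA2⟩ := hmem 𝒰 h𝒰
    exact ⟨A, hA1.trans hle, hA2⟩
  -- choose the sets Aₙ
  have hAn : ∀ n : ℕ, ∃ A : Set X, Cardinal.mk ↥A ≤ Cardinal.aleph0 ∧
      st (Set.univ ×ˢ A) (smallBoxes f (1 / (n + 1))) = Set.univ := fun n =>
    hS _ (smallBoxes_isOpenCover f hf h0 (by positivity))
  choose A hA1 hA2 using hAn
  set B : Set X := ⋃ n, A n with hBdef
  have hBc : B.Countable := Set.countable_iUnion fun n =>
    (Cardinal.mk_le_aleph0_iff.mp (hA1 n))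
  haveI : Countable ↥B := hBc.to_subtype
  refine ⟨↥B → ℝ, inferInstance, inferInstance,
    fun x => fun a => f (x, (a : X)), ?_, ?_⟩
  · exact continuous_pi fun a => hf.comp (continuous_id.prodMk continuous_const)
  · intro x y hxy
    by_contra hne
    have hxyd : (x, y) ∉ Set.diagonal X := hne
    have hr0 : f (x, y) ≠ 0 := fun h => hxyd (hfd ▸ (Set.mem_preimage.mpr (by simp [h])))
    have hrpos : 0 < f (x, y) := lt_of_le_of_ne (hf01 (x, y)).1 (Ne.symm hr0)
    obtain ⟨n, hn⟩ := exists_nat_one_div_lt (half_pos hrpos)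
    have hε : (2 : ℝ) / (n + 1) < f (x, y) := by
      rw [div_lt_iff₀ (by positivity)] at hn ⊢
      linarith
    -- use the star property at level n
    have hxyst : (x, y) ∈ st (Set.univ ×ˢ A n) (smallBoxes f (1 / (n + 1))) := by
      rw [hA2 n]; trivial
    obtain ⟨W, ⟨hW, ⟨z, hzW, hzA⟩⟩, hxyW⟩ := hxyst
    obtain ⟨U, V, hU, hV, rfl, hosc, hVsmall⟩ := hW
    obtain ⟨hxU, hyV⟩ := hxyW
    have haV : z.2 ∈ V := hzW.2
    have haA : z.2 ∈ A n := hzA.2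
    have haB : z.2 ∈ B := Set.mem_iUnion.mpr ⟨n, haA⟩
    -- f (x, a) is large, f (y, a) is small, but they are equal
    have h1 : |f (x, z.2) - f (x, y)| < 1 / (n + 1) :=
      hosc (x, z.2) ⟨hxU, haV⟩ (x, y) ⟨hxU, hyV⟩
    have h2 : f (y, z.2) < 1 / (n + 1) := hVsmall y hyV z.2 haV
    have heq : f (x, z.2) = f (y, z.2) := congrFun hxy ⟨z.2, haB⟩
    rw [abs_lt] at h1
    have : (2 : ℝ) / (n + 1) = 2 * (1 / (n + 1)) := by ring
    linarith [this ▸ hε]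

end DiagonalPaper
end

section
/- If X is a topological space such that X² has countable weak extent and X has a zero-set diagonal, then X is submetrizable. -/
open Set Topology

universe u

namespace DiagonalPaper

/-- if `X²` has countable weak extent and `X` has a zero-set diagonal,
then `X` is submetrizable. -/
theorem submetrizable_of_zeroSetDiagonal_of_sq_countable_weakExtent
    (X : Type u) [TopologicalSpace X]
    (hwe : ∀ 𝒰 : Set (Set (X × X)), IsOpenCover 𝒰 →
      ∃ A : Set (X × X), A.Countable ∧ st A 𝒰 = Set.univ)
    (hz : HasZeroSetDiagonal X) :
    Submetrizable X := by
  classical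
  obtain ⟨f, hf, hIcc, hdiag⟩ := hz
  -- every point has a small open square neighborhood
  have hsmall : ∀ (r : X) (δ : ℝ), 0 < δ → ∃ O : Set X, IsOpen O ∧ r ∈ O ∧
      ∀ a ∈ O, ∀ b ∈ O, f (a, b) < δ := by
    intro r δ hδ
    have h0 : f (r, r) = 0 := by
      have : (r, r) ∈ f ⁻¹' ({0} : Set ℝ) := by
        rw [hdiag]; exact rfl
      simpa using this
    have hmem : (r, r) ∈ f ⁻¹' (Iio δ) := by simp [h0, hδ]
    obtain ⟨U, V, hU, hV, hrU, hrV, hUV⟩ :=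
      isOpen_prod_iff.mp (hf.isOpen_preimage _ isOpen_Iio) r r hmem
    refine ⟨U ∩ V, hU.inter hV, ⟨hrU, hrV⟩, fun a ha b hb => ?_⟩
    exact hUV (mk_mem_prod ha.1 hb.2)
  -- the covers
  set 𝒲 : ℝ → Set (Set (X × X)) := fun ε =>
    {W | ∃ U V : Set X, IsOpen U ∧ IsOpen V ∧ W = U ×ˢ V ∧
      (∀ a ∈ U, ∀ b ∈ U, f (a, b) < ε / 4) ∧
      (∀ a ∈ V, ∀ b ∈ V, f (a, b) < ε / 4) ∧
      ((∀ a ∈ U, ∀ b ∈ V, f (a, b) < ε) ∨ (∀ a ∈ U, ∀ b ∈ V, ε / 2 < f (a, b)))}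
    with h𝒲
  have hcover : ∀ ε : ℝ, 0 < ε → IsOpenCover (𝒲 ε) := by
    intro ε hε
    constructor
    · rintro W ⟨U, V, hU, hV, rfl, -, -, -⟩
      exact hU.prod hV
    · apply eq_univ_of_forall
      rintro ⟨p, q⟩
      obtain ⟨O₁, hO₁, hpO₁, hO₁s⟩ := hsmall p (ε / 4) (by linarith)
      obtain ⟨O₂, hO₂, hqO₂, hO₂s⟩ := hsmall q (ε / 4) (by linarith)
      rcases lt_or_ge (f (p, q)) ε with hlt | hge
      · have hmem : (p, q) ∈ f ⁻¹' (Iio ε) := hlt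
        obtain ⟨P, Q, hP, hQ, hpP, hqQ, hPQ⟩ :=
          isOpen_prod_iff.mp (hf.isOpen_preimage _ isOpen_Iio) p q hmem
        refine mem_sUnion.mpr ⟨(O₁ ∩ P) ×ˢ (O₂ ∩ Q), ?_, mk_mem_prod ⟨hpO₁, hpP⟩ ⟨hqO₂, hqQ⟩⟩
        refine ⟨O₁ ∩ P, O₂ ∩ Q, hO₁.inter hP, hO₂.inter hQ, rfl,
          fun a ha b hb => hO₁s a ha.1 b hb.1,
          fun a ha b hb => hO₂s a ha.1 b hb.1,
          Or.inl fun a ha b hb => hPQ (mk_mem_prod ha.2 hb.2)⟩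
      · have hmem : (p, q) ∈ f ⁻¹' (Ioi (ε / 2)) := by
          simp only [mem_preimage, mem_Ioi]; linarith
        obtain ⟨P, Q, hP, hQ, hpP, hqQ, hPQ⟩ :=
          isOpen_prod_iff.mp (hf.isOpen_preimage _ isOpen_Ioi) p q hmem
        refine mem_sUnion.mpr ⟨(O₁ ∩ P) ×ˢ (O₂ ∩ Q), ?_, mk_mem_prod ⟨hpO₁, hpP⟩ ⟨hqO₂, hqQ⟩⟩
        refine ⟨O₁ ∩ P, O₂ ∩ Q, hO₁.inter hP, hO₂.inter hQ, rfl,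
          fun a ha b hb => hO₁s a ha.1 b hb.1,
          fun a ha b hb => hO₂s a ha.1 b hb.1,
          Or.inr fun a ha b hb => hPQ (mk_mem_prod ha.2 hb.2)⟩
  -- countable "cores" for each cover
  have hA : ∀ n : ℕ, ∃ A : Set (X × X), A.Countable ∧
      st A (𝒲 (1 / (n + 1))) = Set.univ := by
    intro n
    exact hwe _ (hcover _ (by positivity))
  choose A hAc hAst using hA
  -- the countable separating set
  set D : Set X := ⋃ n : ℕ, Prod.snd '' A n with hD
  have hDc : D.Countable := countable_iUnion fun n => (hAc n).image _
  haveI : Countable ↥D := hDc.to_subtype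
  refine ⟨↥D → ℝ, inferInstance, inferInstance,
    fun x => fun d => f (x, (d : X)), ?_, ?_⟩
  · exact continuous_pi fun d => hf.comp (continuous_id.prodMk continuous_const)
  · intro x y hxy
    by_contra hne
    have hfxy0 : f (x, y) ≠ 0 := by
      intro h0
      have : (x, y) ∈ f ⁻¹' ({0} : Set ℝ) := h0
      rw [hdiag] at this
      exact hne this
    have hpos : 0 < f (x, y) := lt_of_le_of_ne (hIcc (x, y)).1 (Ne.symm hfxy0)
    obtain ⟨n, hn⟩ := exists_nat_one_div_lt hpos
    set ε : ℝ := 1 / (n + 1) with hε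
    have hεpos : 0 < ε := by positivity
    have hmem : (x, y) ∈ st (A n) (𝒲 ε) := by
      rw [hAst n]; trivial
    rw [st, mem_sUnion] at hmem
    obtain ⟨W, ⟨hW, hWA⟩, hxyW⟩ := hmem
    obtain ⟨U, V, hU, hV, rfl, hUs, hVs, htype⟩ := hW
    obtain ⟨a, haW, haA⟩ := hWA
    rcases htype with h1 | h2
    · have := h1 x hxyW.1 y hxyW.2
      exact absurd this (not_lt.mpr hn.le)
    · have hd : a.2 ∈ D := mem_iUnion.mpr ⟨n, ⟨a, haA, rfl⟩⟩
      have heq : f (x, a.2) = f (y, a.2) := congrFun hxy ⟨a.2, hd⟩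
      have h1' : ε / 2 < f (x, a.2) := h2 x hxyW.1 a.2 haW.2
      have h2' : f (y, a.2) < ε / 4 := hVs y hxyW.2 a.2 haW.2
      linarith

end DiagonalPaper
end

section
/- If X is a separable topological space with a zero-set diagonal, then X is submetrizable. -/
/-! Restricting a zero-set-diagonal function `f` to `X × D` for a countable dense `D` gives the
continuous map `x ↦ (f (x, d))_{d ∈ D}` into the metrizable space `ℝ^D`. It is injective: the
continuous function `f (x, ·)` is determined by its values on `D`, so if `x` and `y` have the same
image then `f (y, x) = f (x, x) = 0`, i.e. `y = x`. -/

open Set Topology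

universe u

namespace DiagonalPaper

theorem injective_restrict_of_preimage_eq_diagonal {X Y : Type*} [TopologicalSpace X]
    [TopologicalSpace Y] [T2Space Y] {f : X × X → Y} {c : Y} (hf : Continuous f)
    (hΔ : f ⁻¹' {c} = diagonal X) {s : Set X} (hs : Dense s) :
    Function.Injective fun (x : X) (z : s) => f (x, z) := by
  intro x y hxy
  have hsection : (fun z => f (x, z)) = fun z => f (y, z) :=
    Continuous.ext_on hs (by fun_prop) (by fun_prop) fun z hz => congrFun hxy ⟨z, hz⟩
  have hxx : (x, x) ∈ f ⁻¹' {c} := hΔ ▸ rfl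
  have hyx : (y, x) ∈ f ⁻¹' {c} := by
    simpa only [mem_preimage, ← congrFun hsection x] using hxx
  exact (hΔ ▸ hyx : (y, x) ∈ diagonal X).symm

/-- Martin: a separable space with a zero-set diagonal is submetrizable. -/
theorem submetrizable_of_zeroSetDiagonal_of_separable
    (X : Type u) [TopologicalSpace X] [TopologicalSpace.SeparableSpace X]
    (hz : HasZeroSetDiagonal X) :
    Submetrizable X := by
  obtain ⟨f, hf, -, hΔ⟩ := hz
  obtain ⟨s, hs_countable, hs_dense⟩ := TopologicalSpace.exists_countable_dense X
  have : Countable s := hs_countable.to_subtype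
  exact ⟨s → ℝ, inferInstance, inferInstance, fun x z => f (x, z), by fun_prop,
    injective_restrict_of_preimage_eq_diagonal hf hΔ hs_dense⟩

end DiagonalPaper
end

section
/- If X is a topological space with wee(X) ≤ κ and X has a regular G_δ-diagonal, then X condenses onto a Hausdorff space of weight at most κ, i.e., there is a continuous bijection from X onto a Hausdorff space with a base of cardinality at most κ. -/
open Set Topology

universe u

namespace DiagonalPaper

/-- `X` has a regular `G_δ`-diagonal: the diagonal is the intersection of countably many
open sets `U_n` of `X²` as well as of their closures. -/
def HasRegularGDeltaDiagonal (X : Type u) [TopologicalSpace X] : Prop :=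
  ∃ U : ℕ → Set (X × X), (∀ n, IsOpen (U n)) ∧
    Set.diagonal X = ⋂ n, U n ∧ Set.diagonal X = ⋂ n, closure (U n)

lemma wee_spec {X : Type u} [TopologicalSpace X] {κ : Cardinal.{u}}
    (h : weakDoubleExtent X ≤ κ)
    (𝒰 : Set (Set (X × X))) (hc : IsOpenCover 𝒰) :
    ∃ A : Set X, Cardinal.mk ↥A ≤ κ ∧ st (Set.univ ×ˢ A) 𝒰 = Set.univ := by
  have h' : sInf {κ' : Cardinal.{u} | ∀ 𝒰 : Set (Set (X × X)), IsOpenCover 𝒰 →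
      ∃ A : Set X, Cardinal.mk ↥A ≤ κ' ∧ st (Set.univ ×ˢ A) 𝒰 = Set.univ} ≤ κ :=
    le_trans le_sup_right h
  set S := {κ' : Cardinal.{u} | ∀ 𝒰 : Set (Set (X × X)), IsOpenCover 𝒰 →
      ∃ A : Set X, Cardinal.mk ↥A ≤ κ' ∧ st (Set.univ ×ˢ A) 𝒰 = Set.univ} with hS
  have hne : S.Nonempty := by
    refine ⟨Cardinal.mk X, fun 𝒱 h𝒱 => ⟨Set.univ, by rw [Cardinal.mk_univ], ?_⟩⟩
    apply Set.eq_univ_of_forall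
    intro p
    have hp : p ∈ ⋃₀ 𝒱 := by rw [h𝒱.2]; trivial
    obtain ⟨V, hV, hpV⟩ := hp
    exact ⟨V, ⟨hV, ⟨p, hpV, by simp⟩⟩, hpV⟩
  have hmem : sInf S ∈ S := csInf_mem hne
  obtain ⟨A, hA, hst⟩ := hmem 𝒰 hc
  exact ⟨A, hA.trans h', hst⟩


set_option maxHeartbeats 1000000 in
/-- if `wee(X) ≤ κ` and `X` has a regular `G_δ`-diagonal, then `X` condenses
onto a Hausdorff space of weight at most `κ`. -/
theorem condenses_onto_hausdorff_of_regularGDelta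
    (X : Type u) [TopologicalSpace X] (κ : Cardinal.{u})
    (hwee : weakDoubleExtent X ≤ κ)
    (hd : HasRegularGDeltaDiagonal X) :
    ∃ (Y : Type u) (tY : TopologicalSpace Y), @T2Space Y tY ∧
      (∃ B : Set (Set Y), @TopologicalSpace.IsTopologicalBasis Y tY B ∧ Cardinal.mk ↥B ≤ κ) ∧
      ∃ f : X → Y, @Continuous X Y _ tY f ∧ Function.Bijective f := by
  classical
  obtain ⟨U, hUo, hU1, hU2⟩ := hd
  have hκ0 : Cardinal.aleph0 ≤ κ := le_trans le_sup_left hwee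
  have hdiag : ∀ (x : X) (n : ℕ), (x, x) ∈ U n := by
    intro x n
    have : (x, x) ∈ Set.diagonal X := rfl
    rw [hU1] at this
    exact Set.mem_iInter.mp this n
  -- the k-th cover
  set 𝒞 : ℕ → Set (Set (X × X)) := fun k =>
    {S | ∃ V W : Set X, IsOpen V ∧ IsOpen W ∧ S = V ×ˢ W ∧
      (V ×ˢ W ⊆ U k ∨ ∃ j, W ×ˢ W ⊆ U j ∧ V ×ˢ W ∩ closure (U j) = ∅)} with h𝒞
  have hcov : ∀ k, IsOpenCover (𝒞 k) := by
    intro k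
    constructor
    · rintro S ⟨V, W, hV, hW, rfl, -⟩
      exact hV.prod hW
    · apply Set.eq_univ_of_forall
      rintro ⟨x, y⟩
      by_cases hxy : (x, y) ∈ U k
      · obtain ⟨V, W, hV, hW, hxV, hyW, hsub⟩ := isOpen_prod_iff.mp (hUo k) x y hxy
        exact ⟨V ×ˢ W, ⟨V, W, hV, hW, rfl, Or.inl hsub⟩, ⟨hxV, hyW⟩⟩
      · have hne : (x, y) ∉ Set.diagonal X := by
          intro hmem
          have : x = y := hmem
          exact hxy (this ▸ hdiag x k)
        rw [hU2] at hne
        obtain ⟨j, hj⟩ : ∃ j, (x, y) ∉ closure (U j) := by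
          by_contra hcon
          push_neg at hcon
          exact hne (Set.mem_iInter.mpr hcon)
        obtain ⟨V, W1, hV, hW1, hxV, hyW1, hsub⟩ :=
          isOpen_prod_iff.mp (isOpen_compl_iff.mpr isClosed_closure) x y hj
        obtain ⟨W2, W3, hW2, hW3, hyW2, hyW3, hsub2⟩ :=
          isOpen_prod_iff.mp (hUo j) y y (hdiag y j)
        refine ⟨V ×ˢ (W1 ∩ W2 ∩ W3),
          ⟨V, W1 ∩ W2 ∩ W3, hV, (hW1.inter hW2).inter hW3, rfl, Or.inr ⟨j, ?_, ?_⟩⟩,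
          hxV, ⟨hyW1, hyW2⟩, hyW3⟩
        · rintro ⟨a, b⟩ ⟨ha, hb⟩
          exact hsub2 ⟨ha.1.2, hb.2⟩
        · apply Set.eq_empty_iff_forall_notMem.mpr
          rintro ⟨a, b⟩ ⟨⟨haV, hbW⟩, hcl⟩
          exact hsub ⟨haV, hbW.1.1⟩ hcl
  choose A hA hst using fun k => wee_spec hwee (𝒞 k) (hcov k)
  set Atot : Set X := ⋃ k : ULift.{u} ℕ, A k.down with hAtot
  have hAcard : Cardinal.mk ↥Atot ≤ κ := by
    calc Cardinal.mk ↥Atot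
        ≤ Cardinal.mk (ULift.{u} ℕ) * ⨆ k : ULift.{u} ℕ, Cardinal.mk ↥(A k.down) :=
          Cardinal.mk_iUnion_le _
      _ ≤ Cardinal.aleph0 * κ :=
          mul_le_mul' (by simp) (ciSup_le' fun k => hA k.down)
      _ = κ := Cardinal.aleph0_mul_eq hκ0
  -- subbase
  set Vb : ℕ → X → Set X := fun j a => {z | (z, a) ∈ U j} with hVb
  set Wb : ℕ → X → Set X := fun j a => {z | (z, a) ∉ closure (U j)} with hWb
  have hVo : ∀ (j : ℕ) (a : X), IsOpen (Vb j a) :=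
    fun j a => (hUo j).preimage (continuous_id.prodMk continuous_const)
  have hWo : ∀ (j : ℕ) (a : X), IsOpen (Wb j a) :=
    fun j a => (isOpen_compl_iff.mpr isClosed_closure).preimage
      (continuous_id.prodMk continuous_const)
  set σf : ULift.{u} ℕ × ↥Atot × Bool → Set X := fun p =>
    if p.2.2 then Vb p.1.down p.2.1.1 else Wb p.1.down p.2.1.1 with hσf
  set 𝒮 : Set (Set X) := Set.range σf with h𝒮
  have hVmem : ∀ (j : ℕ) (a : X), a ∈ Atot → Vb j a ∈ 𝒮 :=
    fun j a ha => ⟨(⟨j⟩, ⟨a, ha⟩, true), rfl⟩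
  have hWmem : ∀ (j : ℕ) (a : X), a ∈ Atot → Wb j a ∈ 𝒮 :=
    fun j a ha => ⟨(⟨j⟩, ⟨a, ha⟩, false), rfl⟩
  have h𝒮open : ∀ s ∈ 𝒮, IsOpen s := by
    rintro s ⟨⟨j, ⟨a, ha⟩, b⟩, rfl⟩
    cases b
    · exact hWo j.down a
    · exact hVo j.down a
  have h𝒮card : Cardinal.mk ↥𝒮 ≤ κ := by
    have h2κ : (2 : Cardinal.{u}) ≤ κ :=
      le_trans (by exact_mod_cast (Cardinal.nat_lt_aleph0 2).le) hκ0
    refine le_trans Cardinal.mk_range_le ?_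
    have heq : Cardinal.mk (ULift.{u} ℕ × ↥Atot × Bool) =
        Cardinal.aleph0 * (Cardinal.mk ↥Atot * 2) := by
      simp [Cardinal.mk_prod, Cardinal.lift_id, Cardinal.mk_bool, mul_assoc]
    rw [heq]
    calc Cardinal.aleph0 * (Cardinal.mk ↥Atot * 2) ≤ κ * (κ * κ) :=
          mul_le_mul' hκ0 (mul_le_mul' hAcard h2κ)
      _ = κ := by rw [Cardinal.mul_eq_self hκ0, Cardinal.mul_eq_self hκ0]
  -- separation data
  have hsep : ∀ x y : X, x ≠ y → ∃ u v : Set X, u ∈ 𝒮 ∧ v ∈ 𝒮 ∧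
      x ∈ u ∧ y ∈ v ∧ Disjoint u v := by
    intro x y hxy
    have hne : (x, y) ∉ Set.diagonal X := hxy
    rw [hU2] at hne
    obtain ⟨k, hk⟩ : ∃ k, (x, y) ∉ closure (U k) := by
      by_contra hcon
      push_neg at hcon
      exact hne (Set.mem_iInter.mpr hcon)
    have hxyst : (x, y) ∈ st (Set.univ ×ˢ A k) (𝒞 k) := by
      rw [hst k]; trivial
    obtain ⟨S, hS, hxyS⟩ := hxyst
    obtain ⟨hS𝒞, p, hpSA⟩ := hS
    obtain ⟨V, W, hV, hW, rfl, hcase⟩ := hS𝒞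
    rcases hcase with hsub | ⟨j, hWW, hdisj⟩
    · exact absurd (subset_closure (hsub hxyS)) hk
    · have haW : p.2 ∈ W := hpSA.1.2
      have haA : p.2 ∈ Atot := Set.mem_iUnion.mpr ⟨⟨k⟩, hpSA.2.2⟩
      refine ⟨Wb j p.2, Vb j p.2, hWmem j p.2 haA, hVmem j p.2 haA, ?_, ?_, ?_⟩
      · intro hcl
        have hxa : (x, p.2) ∈ V ×ˢ W := Set.mem_prod.mpr ⟨hxyS.1, haW⟩
        exact absurd (Set.mem_inter hxa hcl)
          (by rw [hdisj]; exact Set.notMem_empty _)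
      · exact hWW (Set.mem_prod.mpr ⟨hxyS.2, haW⟩)
      · rw [Set.disjoint_left]
        intro z hz hz'
        exact hz (subset_closure hz')
  -- basis cardinality
  set B : Set (Set X) := (fun f => ⋂₀ f) '' {f : Set (Set X) | f.Finite ∧ f ⊆ 𝒮} with hB
  have hBcard : Cardinal.mk ↥B ≤ κ := by
    refine le_trans Cardinal.mk_image_le ?_
    set T := {f : Set (Set X) | f.Finite ∧ f ⊆ 𝒮} with hT
    have hΦ : Function.Injective
        (fun f : ↥T =>
          (f.2.1.preimage (Set.injOn_of_injective (Subtype.val_injective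
            (p := fun s => s ∈ 𝒮)))).toFinset) := by
      intro f g hfg
      apply Subtype.ext
      have h1 : (Subtype.val ⁻¹' (f : Set (Set X)) : Set ↥𝒮) =
          Subtype.val ⁻¹' (g : Set (Set X)) := by
        have h2 := congrArg (fun F : Finset ↥𝒮 => (F : Set ↥𝒮)) hfg
        simpa [Set.Finite.coe_toFinset] using h2
      have hf : Subtype.val '' (Subtype.val ⁻¹' (f : Set (Set X)) : Set ↥𝒮)
          = (f : Set (Set X)) :=
        Set.image_preimage_eq_of_subset (by rw [Subtype.range_val]; exact f.2.2)
      have hg : Subtype.val '' (Subtype.val ⁻¹' (g : Set (Set X)) : Set ↥𝒮)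
          = (g : Set (Set X)) :=
        Set.image_preimage_eq_of_subset (by rw [Subtype.range_val]; exact g.2.2)
      rw [← hf, ← hg, h1]
    have hTle : Cardinal.mk ↥T ≤ Cardinal.mk (Finset ↥𝒮) :=
      Cardinal.mk_le_of_injective hΦ
    refine hTle.trans ?_
    by_cases hfin : Finite ↥𝒮
    · haveI := Fintype.ofFinite ↥𝒮
      exact le_trans (Cardinal.lt_aleph0_of_finite _).le hκ0
    · haveI : Infinite ↥𝒮 := not_finite_iff_infinite.mp hfin
      rw [Cardinal.mk_finset_of_infinite]
      exact h𝒮card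
  -- assemble
  refine ⟨X, TopologicalSpace.generateFrom 𝒮, ?_, ⟨B, ?_, hBcard⟩, id, ?_, Function.bijective_id⟩
  · refine @T2Space.mk X (TopologicalSpace.generateFrom 𝒮) ?_
    intro x y hxy
    obtain ⟨u, v, hu, hv, hxu, hyv, hduv⟩ := hsep x y hxy
    exact ⟨u, v, TopologicalSpace.isOpen_generateFrom_of_mem hu,
      TopologicalSpace.isOpen_generateFrom_of_mem hv, hxu, hyv, hduv⟩
  · exact @TopologicalSpace.isTopologicalBasis_of_subbasis X
      (TopologicalSpace.generateFrom 𝒮) 𝒮 rfl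
  · refine continuous_generateFrom_iff.mpr ?_
    intro s hs
    simpa using h𝒮open s hs


end DiagonalPaper
end

section
/- If X² has countable weak extent and X has a regular G_δ-diagonal, then X condenses onto a second countable Hausdorff space. -/
open Set Topology

universe u

namespace DiagonalPaper

/-- if `X²` has countable weak extent and `X` has a regular `G_δ`-diagonal,
then `X` condenses onto a second countable Hausdorff space. -/
theorem condenses_onto_secondCountable_hausdorff
    (X : Type u) [TopologicalSpace X]
    (hwe : ∀ 𝒰 : Set (Set (X × X)), IsOpenCover 𝒰 →
      ∃ A : Set (X × X), A.Countable ∧ st A 𝒰 = Set.univ)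
    (hd : HasRegularGDeltaDiagonal X) :
    ∃ (Y : Type u) (tY : TopologicalSpace Y), @T2Space Y tY ∧
      @SecondCountableTopology Y tY ∧
      ∃ f : X → Y, @Continuous X Y _ tY f ∧ Function.Bijective f := by
  classical
  obtain ⟨U, hUo, hUd, hUc⟩ := hd
  -- symmetrize
  set V : ℕ → Set (X × X) := fun n => U n ∩ Prod.swap ⁻¹' U n with hVdef
  have hVo : ∀ n, IsOpen (V n) :=
    fun n => (hUo n).inter ((hUo n).preimage continuous_swap)
  have hUdiag : ∀ n, Set.diagonal X ⊆ U n := fun n => by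
    rw [hUd]; exact Set.iInter_subset _ n
  have hVdiag : ∀ (n : ℕ) (x : X), (x, x) ∈ V n :=
    fun n x => ⟨hUdiag n rfl, hUdiag n rfl⟩
  have hVsymm : ∀ (n : ℕ) (p : X × X), p ∈ V n → p.swap ∈ V n := by
    rintro n p ⟨h1, h2⟩
    exact ⟨h2, by simpa using h1⟩
  have hVint : ∀ p : X × X, (∀ n, p ∈ V n) → p.1 = p.2 := by
    intro p h
    have : p ∈ Set.diagonal X := by
      rw [hUd]; exact Set.mem_iInter.2 fun n => (h n).1
    exact this
  have hVcl : ∀ p : X × X, p.1 ≠ p.2 → ∃ n, p ∉ closure (V n) := by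
    intro p hp
    by_contra h
    push_neg at h
    have : p ∈ Set.diagonal X := by
      rw [hUc]
      exact Set.mem_iInter.2 fun n =>
        closure_mono Set.inter_subset_left (h n)
    exact hp this
  have hclsymm : ∀ (n : ℕ) (p : X × X), p ∈ closure (V n) → p.swap ∈ closure (V n) := by
    intro n p hp
    have h1 : Prod.swap ⁻¹' V n = V n := by
      ext q
      exact ⟨fun h => by simpa using hVsymm n _ h, fun h => hVsymm n q h⟩
    have : p ∈ closure (Prod.swap ⁻¹' V n) := by rw [h1]; exact hp
    exact continuous_swap.closure_preimage_subset (V n) this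
  have hGball : ∀ (n : ℕ) (x : X), ∃ G : Set X, IsOpen G ∧ x ∈ G ∧ G ×ˢ G ⊆ V n := by
    intro n x
    obtain ⟨G, H, hG, hH, hxG, hxH, hsub⟩ := isOpen_prod_iff.1 (hVo n) x x (hVdiag n x)
    exact ⟨G ∩ H, hG.inter hH, ⟨hxG, hxH⟩, fun q hq => hsub ⟨hq.1.1, hq.2.2⟩⟩
  -- the covers of X²
  set 𝒞 : ℕ → Set (Set (X × X)) := fun m =>
    {D | ∃ (n : ℕ) (G W : Set X), IsOpen G ∧ IsOpen W ∧ G ×ˢ G ⊆ V n ∧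
        (W ×ˢ G) ∩ closure (V n) = ∅ ∧ D = G ×ˢ W} ∪
    {D | ∃ G : Set X, IsOpen G ∧ G ×ˢ G ⊆ V m ∧ D = G ×ˢ G} with h𝒞def
  have hcov : ∀ m, IsOpenCover (𝒞 m) := by
    intro m
    constructor
    · rintro D (⟨n, G, W, hG, hW, -, -, rfl⟩ | ⟨G, hG, -, rfl⟩)
      · exact hG.prod hW
      · exact hG.prod hG
    · apply Set.eq_univ_of_forall
      rintro ⟨x, y⟩
      by_cases hxy : x = y
      · subst hxy
        obtain ⟨G, hG, hxG, hGG⟩ := hGball m x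
        exact ⟨G ×ˢ G, Or.inr ⟨G, hG, hGG, rfl⟩, ⟨hxG, hxG⟩⟩
      · obtain ⟨n, hn⟩ := hVcl (x, y) hxy
        have hn' : ((y, x) : X × X) ∉ closure (V n) := fun h => hn (hclsymm n _ h)
        obtain ⟨Q, P, hQ, hP, hyQ, hxP, hQP⟩ :=
          isOpen_prod_iff.1 isClosed_closure.isOpen_compl y x hn'
        obtain ⟨G0, hG0, hxG0, hG0G0⟩ := hGball n x
        refine ⟨(G0 ∩ P) ×ˢ Q,
          Or.inl ⟨n, G0 ∩ P, Q, hG0.inter hP, hQ, ?_, ?_, rfl⟩, ⟨⟨hxG0, hxP⟩, hyQ⟩⟩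
        · exact fun q hq => hG0G0 ⟨hq.1.1, hq.2.1⟩
        · apply Set.eq_empty_iff_forall_notMem.2
          rintro q ⟨⟨hq1, hq2⟩, hqcl⟩
          exact hQP ⟨hq1, hq2.2⟩ hqcl
  choose A hA1 hA2 using fun m => hwe (𝒞 m) (hcov m)
  set C : Set X := ⋃ m, Prod.fst '' A m with hCdef
  have hCcount : C.Countable := Set.countable_iUnion fun m => (hA1 m).image _
  -- the countable subbasis
  set 𝒪 : Set (Set X) :=
    ⋃ (n : ℕ), ⋃ a ∈ C,
      ({{z : X | (z, a) ∈ V n}, {z : X | (z, a) ∉ closure (V n)}} : Set (Set X)) with h𝒪def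
  have h𝒪count : 𝒪.Countable :=
    Set.countable_iUnion fun n => hCcount.biUnion fun a _ =>
      (Set.countable_singleton _).insert _
  have hmemS : ∀ (n : ℕ) (a : X), a ∈ C → {z : X | (z, a) ∈ V n} ∈ 𝒪 := by
    intro n a ha
    exact Set.mem_iUnion.2 ⟨n, Set.mem_iUnion₂.2 ⟨a, ha, Set.mem_insert _ _⟩⟩
  have hmemT : ∀ (n : ℕ) (a : X), a ∈ C → {z : X | (z, a) ∉ closure (V n)} ∈ 𝒪 := by
    intro n a ha
    exact Set.mem_iUnion.2 ⟨n, Set.mem_iUnion₂.2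
      ⟨a, ha, Set.mem_insert_of_mem _ rfl⟩⟩
  have h𝒪open : ∀ O ∈ 𝒪, IsOpen O := by
    intro O hO
    simp only [h𝒪def, Set.mem_iUnion, Set.mem_insert_iff, Set.mem_singleton_iff,
      exists_prop] at hO
    obtain ⟨n, a, -, (rfl | rfl)⟩ := hO
    · exact (hVo n).preimage (continuous_id.prodMk continuous_const)
    · exact isClosed_closure.isOpen_compl.preimage (continuous_id.prodMk continuous_const)
  refine ⟨X, TopologicalSpace.generateFrom 𝒪, ?_, ?_, id, ?_, Function.bijective_id⟩
  · -- T2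
    refine @T2Space.mk X (TopologicalSpace.generateFrom 𝒪) ?_
    intro x y hxy
    have key : ∃ (n : ℕ) (a : X), a ∈ C ∧ (x, a) ∈ V n ∧ (y, a) ∉ closure (V n) := by
      by_contra hk
      push_neg at hk
      have hall : ∀ m, ((x, y) : X × X) ∈ V m := by
        intro m
        have hst : ((x, y) : X × X) ∈ st (A m) (𝒞 m) := by
          rw [hA2 m]; trivial
        obtain ⟨D, ⟨hD𝒞, hDA⟩, hxyD⟩ := hst
        rcases hD𝒞 with ⟨n, G, W, hG, hW, hGG, hWG, rfl⟩ | ⟨G, hG, hGG, rfl⟩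
        · exfalso
          obtain ⟨⟨a, b⟩, habD, habA⟩ := hDA
          have haC : a ∈ C := Set.mem_iUnion.2 ⟨m, ⟨(a, b), habA, rfl⟩⟩
          have hxa : ((x, a) : X × X) ∈ V n := hGG ⟨hxyD.1, habD.1⟩
          have hya : ((y, a) : X × X) ∈ closure (V n) := hk n a haC hxa
          have : ((y, a) : X × X) ∈ (W ×ˢ G) ∩ closure (V n) :=
            ⟨⟨hxyD.2, habD.1⟩, hya⟩
          rw [hWG] at this
          exact this
        · exact hGG hxyD
      exact hxy (hVint (x, y) hall)
    obtain ⟨n, a, haC, hxa, hya⟩ := key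
    refine ⟨{z : X | (z, a) ∈ V n}, {z : X | (z, a) ∉ closure (V n)},
      TopologicalSpace.GenerateOpen.basic _ (hmemS n a haC),
      TopologicalSpace.GenerateOpen.basic _ (hmemT n a haC),
      hxa, hya, ?_⟩
    exact Set.disjoint_left.2 fun z hz hz' => hz' (subset_closure hz)
  · -- second countable
    letI tY : TopologicalSpace X := TopologicalSpace.generateFrom 𝒪
    have hb := TopologicalSpace.isTopologicalBasis_of_subbasis (t := tY) rfl
    exact hb.secondCountableTopology
      ((Set.countable_setOf_finite_subset h𝒪count).image _)
  · -- continuity of id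
    rw [continuous_generateFrom_iff]
    intro O hO
    exact h𝒪open O hO

end DiagonalPaper
end

section
/- For any Hausdorff space X, |X| ≤ 2^{d(X)·sΔ(X)}, where d(X) is the density and sΔ(X) is the strong rank 1 diagonal degree. -/
open Set Topology

universe u

namespace DiagonalPaper

/-- The density of `X` (by convention at least `ℵ₀`): the least cardinality of a dense subset. -/
noncomputable def density (X : Type u) [TopologicalSpace X] : Cardinal.{u} :=
  Cardinal.aleph0 ⊔ sInf {κ | ∃ D : Set X, Dense D ∧ Cardinal.mk ↥D ≤ κ}

/-- `X` has a rank `n` `G_κ`-diagonal: a family of at most `κ` open covers such that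
for all `x ≠ y` some cover `𝒰_i` satisfies `y ∉ Stⁿ(x, 𝒰_i)`. -/
def HasRankDiagonal (X : Type u) [TopologicalSpace X] (n : ℕ) (κ : Cardinal.{u}) : Prop :=
  ∃ (ι : Type u) (𝒰 : ι → Set (Set X)), Cardinal.mk ι ≤ κ ∧
    (∀ i, IsOpenCover (𝒰 i)) ∧ ∀ x y : X, x ≠ y → ∃ i, y ∉ stn n {x} (𝒰 i)

/-- `X` has a strong rank `n` `G_κ`-diagonal: a family of at most `κ` open covers such that
for all `x ≠ y` some cover `𝒰_i` satisfies `y ∉ cl(Stⁿ(x, 𝒰_i))`. -/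
def HasStrongRankDiagonal (X : Type u) [TopologicalSpace X] (n : ℕ) (κ : Cardinal.{u}) : Prop :=
  ∃ (ι : Type u) (𝒰 : ι → Set (Set X)), Cardinal.mk ι ≤ κ ∧
    (∀ i, IsOpenCover (𝒰 i)) ∧ ∀ x y : X, x ≠ y → ∃ i, y ∉ closure (stn n {x} (𝒰 i))

lemma st_isOpen {X : Type u} [TopologicalSpace X] {𝒰 : Set (Set X)}
    (h : IsOpenCover 𝒰) (A : Set X) : IsOpen (st A 𝒰) := by
  apply isOpen_sUnion
  rintro U ⟨hU, -⟩
  exact h.1 U hU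

lemma mem_st_self {X : Type u} [TopologicalSpace X] {𝒰 : Set (Set X)}
    (h : IsOpenCover 𝒰) (y : X) : y ∈ st {y} 𝒰 := by
  have : y ∈ ⋃₀ 𝒰 := h.2.symm ▸ mem_univ y
  obtain ⟨U, hU, hyU⟩ := this
  exact ⟨U, ⟨hU, ⟨y, hyU, mem_singleton y⟩⟩, hyU⟩

/-- for a Hausdorff space `X`, `|X| ≤ 2^{d(X)·sΔ(X)}`; stated with an arbitrary
infinite cardinal `κ` witnessing a strong rank 1 `G_κ`-diagonal (in particular for the least
such `κ`, i.e. `sΔ(X)`). -/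
theorem card_le_two_pow_density_mul_sDelta
    (X : Type u) [TopologicalSpace X] [T2Space X] (κ : Cardinal.{u})
    (hκ : Cardinal.aleph0 ≤ κ) (h : HasStrongRankDiagonal X 1 κ) :
    Cardinal.mk X ≤ 2 ^ (density X * κ) := by
  obtain ⟨ι, 𝒰, hι, hcov, hsep⟩ := h
  have hS : {c : Cardinal.{u} | ∃ D : Set X, Dense D ∧ Cardinal.mk ↥D ≤ c}.Nonempty :=
    ⟨Cardinal.mk ↥(Set.univ : Set X), Set.univ, dense_univ, le_rfl⟩
  obtain ⟨D, hD, hDcard⟩ := csInf_mem hS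
  have hDle : Cardinal.mk ↥D ≤ density X := hDcard.trans le_sup_right
  set f : X → ι → Set ↥D := fun x i => {d | (d : X) ∈ st {x} (𝒰 i)} with hf
  have hinj : Function.Injective f := by
    intro x y hxy
    by_contra hne
    obtain ⟨i, hi⟩ := hsep x y hne
    have hstn : stn 1 {x} (𝒰 i) = st {x} (𝒰 i) := rfl
    rw [hstn] at hi
    apply hi
    rw [mem_closure_iff]
    intro V hV hyV
    have hyst : y ∈ st {y} (𝒰 i) := mem_st_self (hcov i) y
    have hW : IsOpen (V ∩ st {y} (𝒰 i)) := hV.inter (st_isOpen (hcov i) _)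
    obtain ⟨d, ⟨hdV, hdst⟩, hdD⟩ :=
      hD.inter_open_nonempty _ hW ⟨y, hyV, hyst⟩
    have : (⟨d, hdD⟩ : ↥D) ∈ f y i := hdst
    rw [← hxy] at this
    exact ⟨d, hdV, this⟩
  calc Cardinal.mk X ≤ Cardinal.mk (ι → Set ↥D) := Cardinal.mk_le_of_injective hinj
    _ = Cardinal.mk (Set ↥D) ^ Cardinal.mk ι := (Cardinal.power_def _ _).symm
    _ = (2 ^ Cardinal.mk ↥D) ^ Cardinal.mk ι := by rw [Cardinal.mk_set]
    _ = 2 ^ (Cardinal.mk ↥D * Cardinal.mk ι) := (by rw [← Cardinal.power_mul])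
    _ ≤ 2 ^ (density X * κ) :=
      Cardinal.power_le_power_left two_ne_zero (mul_le_mul' hDle hι)

end DiagonalPaper
end

section
/- For any Hausdorff space X, |X| ≤ we(X)^{Δ₂(X)}, where we(X) is the weak extent and Δ₂(X) is the rank 2 diagonal degree. -/
open Set Topology

universe u

namespace DiagonalPaper

/-!
Choose, for every cover `𝒰ᵢ` of the rank 2 diagonal, a set `Aᵢ` of size at most `we(X)` whose
star is `X`, and send `x` to a tuple `(aᵢ)ᵢ` with `x ∈ St(aᵢ, 𝒰ᵢ)`. If `x` and `y` get the same
tuple, then for every `i` both lie in `St(aᵢ, 𝒰ᵢ)`, so `y ∈ St²(x, 𝒰ᵢ)`; the diagonal forces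
`x = y`. Hence `|X| ≤ ∏ᵢ |Aᵢ| ≤ we(X)^κ`.
-/

section Star

variable {X : Type u} {𝒰 : Set (Set X)} {A : Set X} {x y : X}

theorem mem_st_iff : x ∈ st A 𝒰 ↔ ∃ U ∈ 𝒰, (U ∩ A).Nonempty ∧ x ∈ U := by
  simp only [st, mem_sUnion, mem_ofPred_eq, and_assoc]

theorem mem_st_singleton_comm : x ∈ st {y} 𝒰 ↔ y ∈ st {x} 𝒰 := by
  simp only [mem_st_iff, inter_singleton_nonempty, and_comm]

theorem mem_st_iff_exists_mem_st_singleton : x ∈ st A 𝒰 ↔ ∃ a ∈ A, x ∈ st {a} 𝒰 := by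
  simp only [mem_st_iff, Set.Nonempty, mem_inter_iff]
  grind

theorem stn_two : stn 2 A 𝒰 = st (st A 𝒰) 𝒰 := rfl

theorem mem_stn_two_of_mem_st_singleton {a : X} (hx : x ∈ st {a} 𝒰) (hy : y ∈ st {a} 𝒰) :
    y ∈ stn 2 {x} 𝒰 := by
  rw [stn_two, mem_st_iff_exists_mem_st_singleton]
  exact ⟨a, mem_st_singleton_comm.1 hx, hy⟩

theorem st_univ_of_sUnion_eq_univ (h𝒰 : ⋃₀ 𝒰 = univ) : st univ 𝒰 = univ := by
  refine eq_univ_of_forall fun x => ?_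
  obtain ⟨U, hU, hxU⟩ := mem_sUnion.1 (h𝒰 ▸ mem_univ x)
  exact mem_st_iff.2 ⟨U, hU, ⟨x, hxU, mem_univ x⟩, hxU⟩

theorem mk_le_mk_pi_of_st_eq_univ {ι : Type u} {𝒰 : ι → Set (Set X)} {A : ι → Set X}
    (hsep : ∀ x y : X, x ≠ y → ∃ i, y ∉ stn 2 {x} (𝒰 i)) (hA : ∀ i, st (A i) (𝒰 i) = univ) :
    Cardinal.mk X ≤ Cardinal.mk (∀ i, A i) := by
  have hcenter (x : X) (i : ι) : ∃ a : A i, x ∈ st {(a : X)} (𝒰 i) := by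
    obtain ⟨a, ha, hxa⟩ := mem_st_iff_exists_mem_st_singleton.1 (hA i ▸ mem_univ x)
    exact ⟨⟨a, ha⟩, hxa⟩
  choose f hf using hcenter
  refine Cardinal.mk_le_of_injective (f := f) fun x y hxy => ?_
  by_contra hne
  obtain ⟨i, hi⟩ := hsep x y hne
  exact hi (mem_stn_two_of_mem_st_singleton (hf x i) (congrFun hxy i ▸ hf y i))

end Star

theorem exists_mk_le_weakExtent_st_eq_univ {X : Type u} [TopologicalSpace X]
    {𝒰 : Set (Set X)} (h𝒰 : IsOpenCover 𝒰) :
    ∃ A : Set X, Cardinal.mk A ≤ weakExtent X ∧ st A 𝒰 = univ := by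
  have hne : {κ : Cardinal.{u} | ∀ 𝒱 : Set (Set X), IsOpenCover 𝒱 →
      ∃ A : Set X, Cardinal.mk A ≤ κ ∧ st A 𝒱 = univ}.Nonempty :=
    ⟨Cardinal.mk X, fun 𝒱 h𝒱 => ⟨univ, Cardinal.mk_univ.le, st_univ_of_sUnion_eq_univ h𝒱.2⟩⟩
  obtain ⟨A, hAle, hA⟩ := csInf_mem hne 𝒰 h𝒰
  exact ⟨A, hAle.trans le_sup_right, hA⟩

theorem weakExtent_ne_zero (X : Type u) [TopologicalSpace X] : weakExtent X ≠ 0 :=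
  (Cardinal.aleph0_pos.trans_le le_sup_left).ne'

theorem _root_.Cardinal.mk_pi_le_pow {ι : Type u} {α : ι → Type u} {a : Cardinal.{u}}
    (h : ∀ i, Cardinal.mk (α i) ≤ a) : Cardinal.mk (∀ i, α i) ≤ a ^ Cardinal.mk ι := by
  rw [Cardinal.mk_pi, ← Cardinal.prod_const']
  exact Cardinal.prod_le_prod _ _ h

theorem card_le_weakExtent_pow_Delta2_general
    (X : Type u) [TopologicalSpace X] (κ : Cardinal.{u})
    (h : HasRankDiagonal X 2 κ) :
    Cardinal.mk X ≤ weakExtent X ^ κ := by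
  obtain ⟨ι, 𝒰, hι, hcov, hsep⟩ := h
  choose A hAle hA using fun i => exists_mk_le_weakExtent_st_eq_univ (hcov i)
  calc Cardinal.mk X ≤ Cardinal.mk (∀ i, A i) := mk_le_mk_pi_of_st_eq_univ hsep hA
    _ ≤ weakExtent X ^ Cardinal.mk ι := Cardinal.mk_pi_le_pow hAle
    _ ≤ weakExtent X ^ κ := Cardinal.power_le_power_left (weakExtent_ne_zero X) hι

/-- for a Hausdorff space `X`, `|X| ≤ we(X)^{Δ₂(X)}`; stated with an arbitrary
infinite cardinal `κ` witnessing a rank 2 `G_κ`-diagonal (in particular for the least such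
`κ`, i.e. `Δ₂(X)`). -/
theorem card_le_weakExtent_pow_Delta2
    (X : Type u) [TopologicalSpace X] [T2Space X] (κ : Cardinal.{u})
    (hκ : Cardinal.aleph0 ≤ κ) (h : HasRankDiagonal X 2 κ) :
    Cardinal.mk X ≤ weakExtent X ^ κ :=
  card_le_weakExtent_pow_Delta2_general X κ h

end DiagonalPaper
end

section
/- If X is a Baire space with a G_δ-diagonal (equivalently, a rank 1-diagonal), then d(X) ≤ wL(X)^ω. -/
open Set Topology

universe u

namespace DiagonalPaper

/-- The weak Lindelöf number of `X` (by convention at least `ℵ₀`): the least `κ` such that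
every open cover has a subfamily of size at most `κ` with dense union. -/
noncomputable def weakLindelof (X : Type u) [TopologicalSpace X] : Cardinal.{u} :=
  Cardinal.aleph0 ⊔ sInf {κ | ∀ 𝒰 : Set (Set X), IsOpenCover 𝒰 →
    ∃ 𝒱 ⊆ 𝒰, Cardinal.mk ↥𝒱 ≤ κ ∧ Dense (⋃₀ 𝒱)}

/-- `X` has a rank `n`-diagonal: a sequence `{𝒰_k : k < ω}` of open covers such that
for all `x ≠ y` there is `k` with `y ∉ Stⁿ(x, 𝒰_k)`. -/
def HasRankNDiagonal (X : Type u) [TopologicalSpace X] (n : ℕ) : Prop :=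
  ∃ 𝒰 : ℕ → Set (Set X), (∀ k, IsOpenCover (𝒰 k)) ∧
    ∀ x y : X, x ≠ y → ∃ k, y ∉ stn n {x} (𝒰 k)

/-- `X` has a strong rank `n`-diagonal: a sequence `{𝒰_k : k < ω}` of open covers such that
for all `x ≠ y` there is `k` with `y ∉ cl(Stⁿ(x, 𝒰_k))`. -/
def HasStrongRankNDiagonal (X : Type u) [TopologicalSpace X] (n : ℕ) : Prop :=
  ∃ 𝒰 : ℕ → Set (Set X), (∀ k, IsOpenCover (𝒰 k)) ∧
    ∀ x y : X, x ≠ y → ∃ k, y ∉ closure (stn n {x} (𝒰 k))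

/-- if `X` is a Baire space with a `G_δ`-diagonal (equivalently, a rank
1-diagonal), then `d(X) ≤ wL(X)^ω`. -/
theorem density_le_weakLindelof_pow_aleph0
    (X : Type u) [TopologicalSpace X] [BaireSpace X]
    (h : HasRankNDiagonal X 1) :
    density X ≤ weakLindelof X ^ Cardinal.aleph0 := by
  classical
  obtain ⟨𝒰, h𝒰cov, h𝒰sep⟩ := h
  set S : Set Cardinal.{u} := {κ | ∀ 𝒰 : Set (Set X), IsOpenCover 𝒰 →
    ∃ 𝒱 ⊆ 𝒰, Cardinal.mk ↥𝒱 ≤ κ ∧ Dense (⋃₀ 𝒱)} with hS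
  have hSne : S.Nonempty := by
    refine ⟨Cardinal.mk (Set X), fun 𝒞 h𝒞 => ⟨𝒞, subset_rfl, Cardinal.mk_set_le _, ?_⟩⟩
    rw [h𝒞.2]; exact dense_univ
  have hmem : sInf S ∈ S := csInf_mem hSne
  have hκ0 : sInf S ≤ weakLindelof X := le_sup_right
  have hℵ : Cardinal.aleph0 ≤ weakLindelof X := le_sup_left
  -- choose dense subfamilies
  choose 𝒱 h𝒱sub h𝒱card h𝒱dense using fun k => hmem (𝒰 k) (h𝒰cov k)
  set G : Set X := ⋂ k, ⋃₀ 𝒱 k with hG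
  have hGdense : Dense G := by
    refine dense_iInter_of_isOpen (fun k => ?_) h𝒱dense
    exact isOpen_sUnion fun U hU => (h𝒰cov k).1 U (h𝒱sub k hU)
  have hx : ∀ (x : ↥G) (k : ℕ), ∃ V ∈ 𝒱 k, (x : X) ∈ V := by
    intro x k
    have := mem_iInter.mp x.2 k
    exact mem_sUnion.mp this
  choose V hVmem hVx using hx
  have hout : ∀ k, Nonempty (↥(𝒱 k) ↪ Quotient.out (weakLindelof X)) := by
    intro k
    rw [← Cardinal.le_def, Cardinal.mk_out]
    exact (h𝒱card k).trans hκ0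
  let e : ∀ k, ↥(𝒱 k) ↪ Quotient.out (weakLindelof X) := fun k => (hout k).some
  let g : ↥G → (ULift.{u} ℕ → Quotient.out (weakLindelof X)) :=
    fun x k => e k.down ⟨V x k.down, hVmem x k.down⟩
  have hginj : Function.Injective g := by
    intro x y hxy
    by_contra hne
    have hne' : (x : X) ≠ (y : X) := fun hc => hne (Subtype.ext hc)
    obtain ⟨k, hk⟩ := h𝒰sep x y hne'
    have hVeq : V x k = V y k := by
      have := congrFun hxy ⟨k⟩
      have := (e k).injective this
      exact congrArg Subtype.val this
    apply hk
    have : stn 1 {(x : X)} (𝒰 k) = st {(x : X)} (𝒰 k) := by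
      simp [stn]
    rw [this]
    refine mem_sUnion.mpr ⟨V x k, ⟨h𝒱sub k (hVmem x k), ⟨x, hVx x k, rfl⟩⟩, ?_⟩
    rw [hVeq]; exact hVx y k
  have hmkG : Cardinal.mk ↥G ≤ weakLindelof X ^ Cardinal.aleph0 := by
    calc Cardinal.mk ↥G ≤ Cardinal.mk (ULift.{u} ℕ → Quotient.out (weakLindelof X)) :=
          Cardinal.mk_le_of_injective hginj
      _ = weakLindelof X ^ Cardinal.aleph0 := by
          rw [← Cardinal.power_def, Cardinal.mk_out]
          simp
  refine sup_le ?_ (csInf_le' ⟨G, hGdense, hmkG⟩)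
  exact hℵ.trans (Cardinal.self_le_power _ Cardinal.one_le_aleph0)

end DiagonalPaper
end

section
/- If X is a topological space with a rank 3-diagonal, then |X| ≤ wL(X)^ω. -/
open Set Topology

universe u

namespace DiagonalPaper

lemma subset_st_aux {X : Type u} {U A : Set X} {𝒰 : Set (Set X)}
    (hU : U ∈ 𝒰) (hne : (U ∩ A).Nonempty) : U ⊆ st A 𝒰 :=
  subset_sUnion_of_mem ⟨hU, hne⟩

lemma st_isOpen_aux {X : Type u} [TopologicalSpace X] {A : Set X} {𝒰 : Set (Set X)}
    (h : ∀ U ∈ 𝒰, IsOpen U) : IsOpen (st A 𝒰) :=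
  isOpen_sUnion fun U hU => h U hU.1

lemma mem_st_singleton_aux {X : Type u} {x : X} {𝒰 : Set (Set X)}
    (h : ⋃₀ 𝒰 = Set.univ) : x ∈ st {x} 𝒰 := by
  have hx : x ∈ ⋃₀ 𝒰 := h ▸ mem_univ x
  obtain ⟨U, hU, hxU⟩ := hx
  exact subset_st_aux hU ⟨x, hxU, mem_singleton x⟩ hxU

/-- if `X` has a rank 3-diagonal, then `|X| ≤ wL(X)^ω`. -/
theorem card_le_weakLindelof_pow_aleph0_of_rank3
    (X : Type u) [TopologicalSpace X]
    (h : HasRankNDiagonal X 3) :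
    Cardinal.mk X ≤ weakLindelof X ^ Cardinal.aleph0 := by
  classical
  set κ := weakLindelof X with hκdef
  have hκ0 : Cardinal.aleph0 ≤ κ := le_sup_left
  -- the weak Lindelöf number works for every open cover
  have hSne : {κ' : Cardinal.{u} | ∀ 𝒰 : Set (Set X), IsOpenCover 𝒰 →
      ∃ 𝒱 ⊆ 𝒰, Cardinal.mk ↥𝒱 ≤ κ' ∧ Dense (⋃₀ 𝒱)}.Nonempty := by
    refine ⟨Cardinal.mk (Set X), fun 𝒰 h𝒰 => ⟨𝒰, subset_rfl, Cardinal.mk_set_le _, ?_⟩⟩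
    rw [h𝒰.2]
    exact dense_univ
  have hmem := csInf_mem hSne
  have hP : ∀ 𝒰 : Set (Set X), IsOpenCover 𝒰 →
      ∃ 𝒱 ⊆ 𝒰, Cardinal.mk ↥𝒱 ≤ κ ∧ Dense (⋃₀ 𝒱) := by
    intro 𝒰 h𝒰
    obtain ⟨𝒱, h1, h2, h3⟩ := hmem 𝒰 h𝒰
    exact ⟨𝒱, h1, h2.trans le_sup_right, h3⟩
  obtain ⟨𝒰, hcov, hsep⟩ := h
  choose 𝒱 hsub hcard hdense using fun n => hP (𝒰 n) (hcov n)
  -- for each point and each n, pick a member of 𝒱 n meeting St(x, 𝒰 n)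
  have hchoice : ∀ (x : X) (n : ℕ), ∃ W, W ∈ 𝒱 n ∧ (W ∩ st {x} (𝒰 n)).Nonempty := by
    intro x n
    have hopen : IsOpen (st {x} (𝒰 n)) := st_isOpen_aux (hcov n).1
    have hne : (st {x} (𝒰 n)).Nonempty := ⟨x, mem_st_singleton_aux (hcov n).2⟩
    obtain ⟨p, hpSt, hpU⟩ := (hdense n).inter_open_nonempty _ hopen hne
    obtain ⟨W, hW, hpW⟩ := hpU
    exact ⟨W, hW, p, hpW, hpSt⟩
  choose V hV𝒱 hVne using hchoice
  -- the map x ↦ (V x n)ₙ is injective, thanks to the rank 3-diagonal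
  have hinj : Function.Injective fun (x : X) => (fun n => V x n) := by
    intro x y hxy
    by_contra hne
    obtain ⟨k, hk⟩ := hsep x y hne
    have hVeq : V x k = V y k := congrFun hxy k
    apply hk
    have h3 : stn 3 {x} (𝒰 k) = st (st (st {x} (𝒰 k)) (𝒰 k)) (𝒰 k) := rfl
    rw [h3]
    -- V x k ⊆ St²(x)
    have h1 : V x k ⊆ st (st {x} (𝒰 k)) (𝒰 k) :=
      subset_st_aux (hsub k (hV𝒱 x k)) (hVne x k)
    -- a point p in V x k = V y k that lies in St(y)
    obtain ⟨p, hpV, hpSty⟩ := hVne y k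
    rw [← hVeq] at hpV
    obtain ⟨U, ⟨hU𝒰, hUy⟩, hpU⟩ := hpSty
    obtain ⟨q, hqU, hqy⟩ := hUy
    have hyU : y ∈ U := by rwa [← (mem_singleton_iff.mp hqy)]
    exact subset_st_aux hU𝒰 ⟨p, hpU, h1 hpV⟩ hyU
  -- package the choice into a type of size ≤ κ
  let S : Type u := {q : ULift.{u} ℕ × Set X // q.2 ∈ 𝒱 q.1.down}
  let g : X → (ULift.{u} ℕ → S) := fun x n => ⟨(n, V x n.down), hV𝒱 x n.down⟩
  have hginj : Function.Injective g := by
    intro x y hxy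
    apply hinj
    funext n
    have hn := congrFun hxy ⟨n⟩
    have := congrArg (fun s : S => s.1.2) hn
    simpa using this
  have hmkS : Cardinal.mk S ≤ κ := by
    have h1 : Cardinal.mk S ≤ Cardinal.mk (Σ n : ULift.{u} ℕ, ↥(𝒱 n.down)) := by
      have e : S ≃ Σ n : ULift.{u} ℕ, ↥(𝒱 n.down) :=
        Equiv.subtypeProdEquivSigmaSubtype (fun (n : ULift.{u} ℕ) (W : Set X) => W ∈ 𝒱 n.down)
      exact le_of_eq (Cardinal.mk_congr e)
    have h2 : Cardinal.mk (Σ n : ULift.{u} ℕ, ↥(𝒱 n.down)) =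
        Cardinal.sum (fun n : ULift.{u} ℕ => Cardinal.mk ↥(𝒱 n.down)) :=
      Cardinal.mk_sigma _
    have h3 : Cardinal.sum (fun n : ULift.{u} ℕ => Cardinal.mk ↥(𝒱 n.down)) ≤
        Cardinal.sum (fun _ : ULift.{u} ℕ => κ) :=
      Cardinal.sum_le_sum _ _ fun n => hcard n.down
    have h4 : Cardinal.sum (fun _ : ULift.{u} ℕ => κ) = Cardinal.mk (ULift.{u} ℕ) * κ :=
      Cardinal.sum_const' _ _
    have h5 : Cardinal.mk (ULift.{u} ℕ) * κ = Cardinal.aleph0 * κ := by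
      rw [Cardinal.mk_uLift, Cardinal.mk_nat, Cardinal.lift_aleph0]
    have h6 : Cardinal.aleph0 * κ ≤ κ * κ := by
      exact mul_le_mul_left hκ0 κ
    have h7 : κ * κ = κ := Cardinal.mul_eq_self (le_trans hκ0 le_rfl)
    calc Cardinal.mk S ≤ _ := h1
      _ = _ := h2
      _ ≤ _ := h3
      _ = _ := h4
      _ = _ := h5
      _ ≤ _ := h6
      _ = κ := h7
  have hmkX : Cardinal.mk X ≤ Cardinal.mk (ULift.{u} ℕ → S) :=
    Cardinal.mk_le_of_injective hginj
  have harrow : Cardinal.mk (ULift.{u} ℕ → S) = Cardinal.mk S ^ Cardinal.aleph0 := by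
    rw [← Cardinal.power_def, Cardinal.mk_uLift, Cardinal.mk_nat, Cardinal.lift_aleph0]
  calc Cardinal.mk X ≤ Cardinal.mk (ULift.{u} ℕ → S) := hmkX
    _ = Cardinal.mk S ^ Cardinal.aleph0 := harrow
    _ ≤ κ ^ Cardinal.aleph0 := Cardinal.power_le_power_right hmkS

end DiagonalPaper
end

section
/- If X is a space with a strong rank 2-diagonal, then |X| ≤ wL(X)^{πχ(X)}. -/
/-!
For each point `x` fix a π-base `{v x i : i < πχ(X)}` at `x`, and for each `n` a subfamily
`𝒱ₙ ⊆ 𝒰ₙ` of size at most `wL(X)` with dense union; choose `w x i n ∈ 𝒱ₙ` meeting `v x i`.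
Code `x` by the function sending `(i, n)` to `w x i n` if `v x i ⊆ St(x, 𝒰ₙ)`, and to a dummy
value otherwise. If `x ≠ y`, pick `n` with `y ∉ cl St²(x, 𝒰ₙ)`; some `v y i` lies in `St(y, 𝒰ₙ)`
and misses `cl St²(x, 𝒰ₙ)`. If `x` and `y` had the same code, the common value `W ∈ 𝒰ₙ` would
meet `v x i ⊆ St(x, 𝒰ₙ)`, hence lie in `St²(x, 𝒰ₙ)`, and also meet `v y i`: a contradiction.
So the coding is injective with at most `wL(X)` values on `πχ(X) · ℵ₀` arguments.
-/

open Set Topology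

universe u

namespace DiagonalPaper

/-- `B` is a local π-base at `x`: a family of nonempty open sets such that
every open neighbourhood of `x` contains a member of `B`. -/
def IsPiBaseAt {X : Type u} [TopologicalSpace X] (x : X) (B : Set (Set X)) : Prop :=
  (∀ V ∈ B, IsOpen V ∧ V.Nonempty) ∧
    ∀ U : Set X, IsOpen U → x ∈ U → ∃ V ∈ B, V ⊆ U

/-- The π-character of `X` (by convention at least `ℵ₀`): the supremum over `x ∈ X` of the
least cardinality of a local π-base at `x`. -/
noncomputable def piCharacter (X : Type u) [TopologicalSpace X] : Cardinal.{u} :=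
  Cardinal.aleph0 ⊔ ⨆ x : X, sInf {κ | ∃ B : Set (Set X), IsPiBaseAt x B ∧ Cardinal.mk ↥B ≤ κ}

end DiagonalPaper

open Cardinal Function

namespace Cardinal

theorem mk_le_mk_pow_of_injective {α ι β : Type u} {f : α → ι → β} (hf : Injective f)
    {T : Set β} (hT : ∀ a i, f a i ∈ T) : #α ≤ #T ^ #ι := by
  rw [power_def]
  refine mk_le_of_injective (f := fun a i => ⟨f a i, hT a i⟩) fun a b hab => hf ?_
  exact funext fun i => congrArg Subtype.val (congrFun hab i)

theorem mk_iUnion_nat_le {α : Type u} {s : ℕ → Set α} {κ : Cardinal.{u}} (hκ : ℵ₀ ≤ κ)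
    (hs : ∀ n, #(s n) ≤ κ) : #(⋃ n, s n) ≤ κ := by
  have h := mk_iUnion_le_lift s
  simp only [lift_uzero, mk_nat, lift_aleph0] at h
  exact h.trans <| (mul_le_mul' le_rfl (ciSup_le' hs)).trans (aleph0_mul_eq hκ).le

theorem mk_insert_le_of_aleph0_le {α : Type u} {s : Set α} {a : α} {κ : Cardinal.{u}}
    (hκ : ℵ₀ ≤ κ) (hs : #s ≤ κ) : #(insert a s : Set α) ≤ κ :=
  mk_insert_le.trans <| (add_le_add_left hs 1).trans (add_one_eq hκ).le

end Cardinal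

theorem Dense.exists_mem_inter_nonempty {X : Type*} [TopologicalSpace X] {𝒱 : Set (Set X)}
    (h𝒱 : Dense (⋃₀ 𝒱)) {V : Set X} (hV : IsOpen V) (hne : V.Nonempty) :
    ∃ W ∈ 𝒱, (W ∩ V).Nonempty := by
  obtain ⟨z, hzV, W, hW, hzW⟩ := h𝒱.inter_open_nonempty V hV hne
  exact ⟨W, hW, z, hzW, hzV⟩

namespace DiagonalPaper

theorem subset_st {X : Type u} {A U : Set X} {𝒰 : Set (Set X)} (hU : U ∈ 𝒰)
    (hUA : (U ∩ A).Nonempty) : U ⊆ st A 𝒰 :=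
  subset_sUnion_of_mem ⟨hU, hUA⟩

section StarCode

variable {X : Type u} {ι : Type*} {𝒰 : ℕ → Set (Set X)} {v : X → ι → Set X}
  {w : X → ι → ℕ → Set X}

open Classical in
noncomputable def starCode (𝒰 : ℕ → Set (Set X)) (v : X → ι → Set X) (w : X → ι → ℕ → Set X)
    (x : X) (p : ι × ℕ) : Option (Set X) :=
  if v x p.1 ⊆ st {x} (𝒰 p.2) then some (w x p.1 p.2) else none

theorem starCode_eq_some {x : X} {i : ι} {n : ℕ} {W : Set X} :
    starCode 𝒰 v w x (i, n) = some W ↔ v x i ⊆ st {x} (𝒰 n) ∧ w x i n = W := by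
  unfold starCode
  split_ifs with h <;> simp [h]

theorem starCode_mem {𝒱 : ℕ → Set (Set X)} (hw : ∀ x i n, w x i n ∈ 𝒱 n) (x : X) (p : ι × ℕ) :
    starCode 𝒰 v w x p ∈ insert none (some '' ⋃ n, 𝒱 n) := by
  unfold starCode
  split_ifs
  · exact mem_insert_of_mem _ (mem_image_of_mem _ (mem_iUnion_of_mem _ (hw x p.1 p.2)))
  · exact mem_insert _ _

end StarCode

variable {X : Type u} [TopologicalSpace X]

theorem aleph0_le_weakLindelof : ℵ₀ ≤ weakLindelof X := le_sup_left

theorem aleph0_le_piCharacter : ℵ₀ ≤ piCharacter X := le_sup_left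

theorem IsOpenCover.exists_subset_card_le_weakLindelof_dense {𝒰 : Set (Set X)}
    (h𝒰 : IsOpenCover 𝒰) : ∃ 𝒱 ⊆ 𝒰, #𝒱 ≤ weakLindelof X ∧ Dense (⋃₀ 𝒱) := by
  have hne : {κ | ∀ 𝒰 : Set (Set X), IsOpenCover 𝒰 →
      ∃ 𝒱 ⊆ 𝒰, #𝒱 ≤ κ ∧ Dense (⋃₀ 𝒱)}.Nonempty :=
    ⟨#(Set X), fun 𝒞 h𝒞 => ⟨𝒞, subset_rfl, mk_set_le _, by simp [h𝒞.2]⟩⟩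
  obtain ⟨𝒱, h𝒱𝒰, h𝒱, hdense⟩ := csInf_mem hne 𝒰 h𝒰
  exact ⟨𝒱, h𝒱𝒰, h𝒱.trans le_sup_right, hdense⟩

theorem exists_isPiBaseAt_card_le_piCharacter (x : X) :
    ∃ B, IsPiBaseAt x B ∧ #B ≤ piCharacter X := by
  have hne : {κ | ∃ B : Set (Set X), IsPiBaseAt x B ∧ #B ≤ κ}.Nonempty :=
    ⟨#(Set X), {V | IsOpen V ∧ V.Nonempty},
      ⟨fun _ hV => hV, fun U hU hxU => ⟨U, ⟨hU, x, hxU⟩, subset_rfl⟩⟩, mk_set_le _⟩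
  obtain ⟨B, hB, hBκ⟩ := csInf_mem hne
  exact ⟨B, hB, hBκ.trans <| (le_ciSup bddAbove_of_small x).trans le_sup_right⟩

theorem IsPiBaseAt.nonempty {x : X} {B : Set (Set X)} (hB : IsPiBaseAt x B) : B.Nonempty :=
  let ⟨V, hV, _⟩ := hB.2 univ isOpen_univ (mem_univ x)
  ⟨V, hV⟩

theorem exists_isPiBaseAt_range (x : X) :
    ∃ v : (piCharacter X).out → Set X, IsPiBaseAt x (range v) := by
  obtain ⟨B, hB, hBκ⟩ := exists_isPiBaseAt_card_le_piCharacter x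
  have : Nonempty B := hB.nonempty.to_subtype
  obtain ⟨e⟩ : Nonempty (B ↪ (piCharacter X).out) := by rwa [← le_def, mk_out]
  refine ⟨fun i => (invFun e i : B), ?_⟩
  rwa [range_comp' Subtype.val, (invFun_surjective e.injective).range_eq, image_univ,
    Subtype.range_coe]

theorem IsPiBaseAt.exists_subset_st_disjoint {𝒰 : Set (Set X)} (h𝒰 : IsOpenCover 𝒰) {y : X}
    {B : Set (Set X)} (hB : IsPiBaseAt y B) {C : Set X} (hC : IsClosed C) (hy : y ∉ C) :
    ∃ V ∈ B, V ⊆ st {y} 𝒰 ∧ Disjoint V C := by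
  obtain ⟨U, hU, hyU⟩ : y ∈ ⋃₀ 𝒰 := h𝒰.2 ▸ mem_univ y
  obtain ⟨V, hVB, hVU⟩ := hB.2 (U ∩ Cᶜ) ((h𝒰.1 U hU).inter hC.isOpen_compl) ⟨hyU, hy⟩
  exact ⟨V, hVB, hVU.trans <| inter_subset_left.trans <| subset_st hU ⟨y, hyU, rfl⟩,
    disjoint_compl_left.mono_left (hVU.trans inter_subset_right)⟩

theorem starCode_injective {ι : Type*} {𝒰 : ℕ → Set (Set X)} {v : X → ι → Set X}
    {w : X → ι → ℕ → Set X} (h𝒰 : ∀ n, IsOpenCover (𝒰 n))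
    (hdiag : ∀ x y : X, x ≠ y → ∃ n, y ∉ closure (stn 2 {x} (𝒰 n)))
    (hv : ∀ x, IsPiBaseAt x (range (v x)))
    (hw : ∀ x i n, w x i n ∈ 𝒰 n ∧ (w x i n ∩ v x i).Nonempty) :
    Injective (starCode 𝒰 v w) := by
  intro x y hxy
  by_contra hne
  obtain ⟨n, hn⟩ := hdiag x y hne
  obtain ⟨_, ⟨i, rfl⟩, hyi, hdisj⟩ :=
    (hv y).exists_subset_st_disjoint (h𝒰 n) isClosed_closure hn
  obtain ⟨hxi, hW⟩ := starCode_eq_some.1 <|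
    (congrFun hxy (i, n)).trans (starCode_eq_some.2 ⟨hyi, rfl⟩)
  have hWx : w x i n ⊆ stn 2 {x} (𝒰 n) :=
    subset_st (hw x i n).1 ((hw x i n).2.mono (inter_subset_inter_right _ hxi))
  obtain ⟨z, hzW, hzv⟩ := (hw y i n).2
  exact hdisj.ne_of_mem hzv (subset_closure (hWx (hW ▸ hzW))) rfl

/-- if `X` has a strong rank 2-diagonal, then `|X| ≤ wL(X)^{πχ(X)}`. -/
theorem card_le_weakLindelof_pow_piCharacter_of_strongRank2
    (X : Type u) [TopologicalSpace X]
    (h : HasStrongRankNDiagonal X 2) :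
    Cardinal.mk X ≤ weakLindelof X ^ piCharacter X := by
  obtain ⟨𝒰, h𝒰, hdiag⟩ := h
  choose 𝒱 h𝒱𝒰 h𝒱 hdense using fun n => (h𝒰 n).exists_subset_card_le_weakLindelof_dense
  choose v hv using exists_isPiBaseAt_range (X := X)
  choose w hw𝒱 hwv using fun x i n =>
    (hdense n).exists_mem_inter_nonempty ((hv x).1 _ (mem_range_self i)).1
      ((hv x).1 _ (mem_range_self i)).2
  have hT : #(insert none (some '' ⋃ n, 𝒱 n) : Set (Option (Set X))) ≤ weakLindelof X :=
    mk_insert_le_of_aleph0_le aleph0_le_weakLindelof <| mk_image_le.trans <|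
      mk_iUnion_nat_le aleph0_le_weakLindelof h𝒱
  have hinj : Injective (starCode 𝒰 v w) :=
    starCode_injective h𝒰 hdiag hv fun x i n => ⟨h𝒱𝒰 n (hw𝒱 x i n), hwv x i n⟩
  calc #X ≤ _ ^ #((piCharacter X).out × ℕ) := mk_le_mk_pow_of_injective hinj (starCode_mem hw𝒱)
    _ ≤ weakLindelof X ^ (piCharacter X * ℵ₀) := by
      simpa only [mk_prod, lift_id, mk_out, lift_uzero, mk_nat, lift_aleph0] using
        power_le_power_right hT
    _ = weakLindelof X ^ piCharacter X := by rw [mul_aleph0_eq aleph0_le_piCharacter]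

end DiagonalPaper
end

section
/- If X has a strong rank 2-diagonal, then X has a regular G_δ-diagonal. -/
open Set Topology

universe u

namespace DiagonalPaper

/-- a space with a strong rank 2-diagonal has a regular `G_δ`-diagonal. -/
theorem regularGDeltaDiagonal_of_strongRank2
    (X : Type u) [TopologicalSpace X]
    (h : HasStrongRankNDiagonal X 2) :
    HasRegularGDeltaDiagonal X := by
  obtain ⟨𝒰, hcov, hsep⟩ := h
  set U : ℕ → Set (X × X) := fun k => ⋃ V ∈ 𝒰 k, V ×ˢ V with hUdef
  have hopen : ∀ k, IsOpen (U k) := fun k =>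
    isOpen_biUnion fun V hV => ((hcov k).1 V hV).prod ((hcov k).1 V hV)
  have hdiag : ∀ k, Set.diagonal X ⊆ U k := by
    rintro k ⟨x, y⟩ hp
    have hx : x ∈ ⋃₀ 𝒰 k := by rw [(hcov k).2]; trivial
    obtain ⟨V, hV, hxV⟩ := hx
    have hp' : x = y := hp
    exact Set.mem_biUnion hV ⟨hxV, hp' ▸ hxV⟩
  have key : ∀ p : X × X, (∀ k, p ∈ closure (U k)) → p ∈ Set.diagonal X := by
    rintro ⟨x, y⟩ hcl
    by_contra hxy
    obtain ⟨k, hk⟩ := hsep x y hxy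
    have hx : x ∈ ⋃₀ 𝒰 k := by rw [(hcov k).2]; trivial
    obtain ⟨V, hV, hxV⟩ := hx
    have hstn : stn 2 {x} (𝒰 k) = st (st {x} (𝒰 k)) (𝒰 k) := rfl
    have hN : IsOpen (V ×ˢ (closure (stn 2 {x} (𝒰 k)))ᶜ) :=
      ((hcov k).1 V hV).prod isClosed_closure.isOpen_compl
    have hmem : (x, y) ∈ V ×ˢ (closure (stn 2 {x} (𝒰 k)))ᶜ := ⟨hxV, hk⟩
    have := hcl k
    rw [mem_closure_iff] at this
    obtain ⟨⟨a, b⟩, ⟨haV, hb⟩, hab⟩ := this _ hN hmem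
    obtain ⟨W, hW, haW, hbW⟩ : ∃ W ∈ 𝒰 k, a ∈ W ∧ b ∈ W := by
      obtain ⟨W, hW1, hW2, hW3⟩ : ∃ i, a ∈ i ∧ i ∈ 𝒰 k ∧ b ∈ i := by
        simpa [hUdef] using hab
      exact ⟨W, hW2, hW1, hW3⟩
    apply hb
    apply subset_closure
    rw [hstn]
    have hV' : V ⊆ st {x} (𝒰 k) := fun z hz => ⟨V, ⟨hV, ⟨x, hxV, rfl⟩⟩, hz⟩
    exact ⟨W, ⟨hW, ⟨a, haW, hV' haV⟩⟩, hbW⟩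
  have hcap : Set.diagonal X = ⋂ n, closure (U n) := by
    apply Set.Subset.antisymm
    · exact fun p hp => Set.mem_iInter.2 fun n => subset_closure (hdiag n hp)
    · exact fun p hp => key p fun k => Set.mem_iInter.1 hp k
  refine ⟨U, hopen, Set.Subset.antisymm (fun p hp => Set.mem_iInter.2 fun n => hdiag n hp)
      ?_, hcap⟩
  intro p hp
  rw [hcap]
  exact Set.mem_iInter.2 fun n => subset_closure (Set.mem_iInter.1 hp n)

end DiagonalPaper
end

section
/- Let D be the one-point compactification of a discrete space of size continuum and let Ψ = 𝒜 ∪ ω be a Mrówka space with |𝒜| = 𝔠. Then the topological sum X = Ψ ⊕ D satisfies we(X) = ω but wee(X) > ω. -/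
open Set Topology OnePoint

universe u

namespace DiagonalPaper

/-- The Mrówka (isocompactification) topology on `↥𝒜 ⊕ ℕ` associated with an almost disjoint
family `𝒜` of subsets of `ℕ`: points of `ℕ` are isolated and basic neighbourhoods of
`A ∈ 𝒜` are `{A} ∪ (A \ F)` for finite `F`. -/
def psiTopology (𝒜 : Set (Set ℕ)) : TopologicalSpace (↥𝒜 ⊕ ℕ) :=
  TopologicalSpace.generateFrom
    ({S | ∃ n : ℕ, S = {Sum.inr n}} ∪
      {S | ∃ (A : ↥𝒜) (F : Set ℕ), F.Finite ∧
        S = {Sum.inl A} ∪ Sum.inr '' ((A : Set ℕ) \ F)})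

section Aux

variable {𝒜 : Set (Set ℕ)}

lemma psi_open_cofinite (A : ↥𝒜) {U : Set (↥𝒜 ⊕ ℕ)}
    (hU : IsOpen[psiTopology 𝒜] U) :
    Sum.inl A ∈ U → ((A : Set ℕ) \ {n | Sum.inr n ∈ U}).Finite := by
  have hU' : TopologicalSpace.GenerateOpen
      ({S | ∃ n : ℕ, S = {Sum.inr n}} ∪
        {S | ∃ (A : ↥𝒜) (F : Set ℕ), F.Finite ∧
          S = {Sum.inl A} ∪ Sum.inr '' ((A : Set ℕ) \ F)}) U := hU
  clear hU
  induction hU' with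
  | basic s hs =>
      intro hA
      rcases hs with ⟨n, rfl⟩ | ⟨B, F, hF, rfl⟩
      · simp at hA
      · rcases hA with hA | hA
        · have hAB : A = B := Sum.inl.inj (Set.mem_singleton_iff.mp hA)
          subst hAB
          refine hF.subset ?_
          intro n hn
          by_contra hnF
          exact hn.2 (Or.inr ⟨n, ⟨hn.1, hnF⟩, rfl⟩)
        · simp at hA
  | univ => intro _; simp
  | inter s t hs ht ihs iht =>
      intro hA
      have hsub : (A:Set ℕ) \ {n | Sum.inr n ∈ s ∩ t} ⊆
          ((A:Set ℕ) \ {n | Sum.inr n ∈ s}) ∪ ((A:Set ℕ) \ {n | Sum.inr n ∈ t}) := by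
        intro n hn
        by_cases h1 : Sum.inr n ∈ s
        · exact Or.inr ⟨hn.1, fun h2 => hn.2 ⟨h1, h2⟩⟩
        · exact Or.inl ⟨hn.1, h1⟩
      exact ((ihs hA.1).union (iht hA.2)).subset hsub
  | sUnion S hS ih =>
      intro hA
      obtain ⟨s, hsS, hAs⟩ := hA
      refine (ih s hsS hAs).subset ?_
      intro n hn
      exact ⟨hn.1, fun h => hn.2 ⟨s, hsS, h⟩⟩

lemma psi_open_meets (hinf : ∀ B ∈ 𝒜, B.Infinite) (A : ↥𝒜) {U : Set (↥𝒜 ⊕ ℕ)}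
    (hU : IsOpen[psiTopology 𝒜] U) (hA : Sum.inl A ∈ U) :
    ∃ n : ℕ, Sum.inr n ∈ U := by
  have h := psi_open_cofinite A hU hA
  have h2 : ((A : Set ℕ) ∩ {n | Sum.inr n ∈ U}).Infinite := by
    have hd := (hinf A A.2).diff h
    refine hd.mono ?_
    intro n hn
    rcases hn with ⟨hn1, hn2⟩
    exact ⟨hn1, by_contra fun hc => hn2 ⟨hn1, hc⟩⟩
  obtain ⟨n, hn⟩ := h2.nonempty
  exact ⟨n, hn.2⟩

lemma psi_open_basic (A : ↥𝒜) :
    IsOpen[psiTopology 𝒜] ({Sum.inl A} ∪ Sum.inr '' (A : Set ℕ)) := by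
  apply TopologicalSpace.GenerateOpen.basic
  exact Or.inr ⟨A, ∅, finite_empty, by rw [diff_empty]⟩

lemma psi_open_nat : IsOpen[psiTopology 𝒜] (Sum.inr '' (univ : Set ℕ)) := by
  have h : Sum.inr '' (univ : Set ℕ) = ⋃₀ {S : Set (↥𝒜 ⊕ ℕ) | ∃ n : ℕ, S = {Sum.inr n}} := by
    ext x
    constructor
    · rintro ⟨n, -, rfl⟩
      exact ⟨{Sum.inr n}, ⟨n, rfl⟩, rfl⟩
    · rintro ⟨s, ⟨n, rfl⟩, hx⟩
      exact ⟨n, trivial, (Set.mem_singleton_iff.mp hx).symm⟩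
  rw [h]
  exact TopologicalSpace.GenerateOpen.sUnion _ fun s hs =>
    TopologicalSpace.GenerateOpen.basic _ (Or.inl hs)

end Aux

/-- for `Ψ` a Mrówka space over a MAD family of size continuum and `D` the
one-point compactification of a discrete space of size continuum, the sum `X = Ψ ⊕ D`
satisfies `we(X) = ω` and `wee(X) > ω`. -/
theorem mrowka_sum_weakExtent_lt_weakDoubleExtent
    (𝒜 : Set (Set ℕ))
    (hinf : ∀ A ∈ 𝒜, A.Infinite)
    (had : ∀ A ∈ 𝒜, ∀ B ∈ 𝒜, A ≠ B → (A ∩ B).Finite)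
    (hmad : ∀ C : Set ℕ, C.Infinite → ∃ A ∈ 𝒜, (A ∩ C).Infinite)
    (hcard : Cardinal.mk ↥𝒜 = Cardinal.continuum)
    (D₀ : Type) [TopologicalSpace D₀] [DiscreteTopology D₀]
    (hD : Cardinal.mk D₀ = Cardinal.continuum) :
    @weakExtent ((↥𝒜 ⊕ ℕ) ⊕ OnePoint D₀)
        (@instTopologicalSpaceSum _ _ (psiTopology 𝒜) inferInstance) = Cardinal.aleph0 ∧
    Cardinal.aleph0 < @weakDoubleExtent ((↥𝒜 ⊕ ℕ) ⊕ OnePoint D₀)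
        (@instTopologicalSpaceSum _ _ (psiTopology 𝒜) inferInstance) := by
  classical
  letI tΨ : TopologicalSpace (↥𝒜 ⊕ ℕ) := psiTopology 𝒜
  constructor
  · -- Part 1 : weak extent is ℵ₀
    have hmem : ∀ 𝒰 : Set (Set ((↥𝒜 ⊕ ℕ) ⊕ OnePoint D₀)), IsOpenCover 𝒰 →
        ∃ A : Set ((↥𝒜 ⊕ ℕ) ⊕ OnePoint D₀),
          Cardinal.mk ↥A ≤ Cardinal.aleph0 ∧ st A 𝒰 = Set.univ := by
      rintro 𝒰 ⟨hop, hcov⟩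
      have hcov' : ∀ x : (↥𝒜 ⊕ ℕ) ⊕ OnePoint D₀, ∃ U ∈ 𝒰, x ∈ U := by
        intro x
        have hx : x ∈ ⋃₀ 𝒰 := by rw [hcov]; trivial
        exact hx
      obtain ⟨Uoo, hUoo, hxUoo⟩ := hcov' (Sum.inr ∞)
      have hopenoo : IsOpen (Sum.inr ⁻¹' Uoo : Set (OnePoint D₀)) :=
        (isOpen_sum_iff.mp (hop Uoo hUoo)).2
      have hK : IsCompact (((fun d : D₀ => (d : OnePoint D₀)) ⁻¹' (Sum.inr ⁻¹' Uoo) : Set D₀)ᶜ) :=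
        (OnePoint.isOpen_def.mp hopenoo).1 hxUoo
      have hKfin : (((fun d : D₀ => (d : OnePoint D₀)) ⁻¹' (Sum.inr ⁻¹' Uoo) : Set D₀)ᶜ).Finite :=
        hK.finite_of_discrete
      refine ⟨(Sum.inl '' (Sum.inr '' (univ : Set ℕ))) ∪ {Sum.inr ∞} ∪
        (Sum.inr '' ((fun d : D₀ => (d : OnePoint D₀)) ''
          (((fun d : D₀ => (d : OnePoint D₀)) ⁻¹' (Sum.inr ⁻¹' Uoo) : Set D₀)ᶜ))), ?_, ?_⟩
      · rw [Cardinal.mk_le_aleph0_iff, Set.countable_coe_iff]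
        exact (((Set.countable_univ.image _).image _).union (Set.countable_singleton _)).union
          (((hKfin.image _).image _).countable)
      · apply Set.eq_univ_of_forall
        rintro ((B | n) | (_ | d))
        · obtain ⟨U, hU, hxU⟩ := hcov' (Sum.inl (Sum.inl B))
          have hop' : IsOpen (Sum.inl ⁻¹' U : Set (↥𝒜 ⊕ ℕ)) := (isOpen_sum_iff.mp (hop U hU)).1
          obtain ⟨n, hn⟩ := psi_open_meets hinf B hop' hxU
          exact ⟨U, ⟨hU, ⟨Sum.inl (Sum.inr n), hn,
            Or.inl (Or.inl ⟨Sum.inr n, ⟨n, trivial, rfl⟩, rfl⟩)⟩⟩, hxU⟩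
        · obtain ⟨U, hU, hxU⟩ := hcov' (Sum.inl (Sum.inr n))
          exact ⟨U, ⟨hU, ⟨Sum.inl (Sum.inr n), hxU,
            Or.inl (Or.inl ⟨Sum.inr n, ⟨n, trivial, rfl⟩, rfl⟩)⟩⟩, hxU⟩
        · exact ⟨Uoo, ⟨hUoo, ⟨Sum.inr ∞, hxUoo, Or.inl (Or.inr rfl)⟩⟩, hxUoo⟩
        · by_cases hd : d ∈ ((fun d : D₀ => (d : OnePoint D₀)) ⁻¹' (Sum.inr ⁻¹' Uoo) : Set D₀)ᶜ
          · obtain ⟨U, hU, hxU⟩ := hcov' (Sum.inr (d : OnePoint D₀))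
            exact ⟨U, ⟨hU, ⟨Sum.inr (d : OnePoint D₀), hxU,
              Or.inr ⟨(d : OnePoint D₀), ⟨d, hd, rfl⟩, rfl⟩⟩⟩, hxU⟩
          · have hdU : Sum.inr (d : OnePoint D₀) ∈ Uoo := not_not.mp hd
            exact ⟨Uoo, ⟨hUoo, ⟨Sum.inr ∞, hxUoo, Or.inl (Or.inr rfl)⟩⟩, hdU⟩
    simp only [weakExtent]
    exact le_antisymm (sup_le le_rfl (csInf_le (OrderBot.bddBelow _) hmem)) le_sup_left
  · -- Part 2 : weak double extent exceeds ℵ₀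
    have hle : Cardinal.mk ↥𝒜 ≤ Cardinal.mk D₀ := by rw [hcard, hD]
    obtain ⟨f⟩ := (Cardinal.le_def _ _).mp hle
    set UA : ↥𝒜 → Set ((↥𝒜 ⊕ ℕ) ⊕ OnePoint D₀) :=
      fun A => Sum.inl '' ({Sum.inl A} ∪ Sum.inr '' (A : Set ℕ)) with hUAdef
    set TT : Set ((↥𝒜 ⊕ ℕ) ⊕ OnePoint D₀) :=
      (Sum.inl '' (Sum.inr '' (univ : Set ℕ))) ∪ Sum.inr '' (univ : Set (OnePoint D₀)) with hTTdef
    set 𝒰 : Set (Set (((↥𝒜 ⊕ ℕ) ⊕ OnePoint D₀) × ((↥𝒜 ⊕ ℕ) ⊕ OnePoint D₀))) :=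
      {V | (∃ (A : ↥𝒜) (d : D₀), V = UA A ×ˢ ({Sum.inr ((d : OnePoint D₀))} : Set _))
        ∨ (∃ A : ↥𝒜, V = UA A ×ˢ (Sum.inr '' ({((f A : D₀) : OnePoint D₀)}ᶜ)))
        ∨ V = TT ×ˢ (Sum.inr '' (univ : Set (OnePoint D₀)))
        ∨ V = (univ : Set _) ×ˢ (Sum.inl '' (univ : Set (↥𝒜 ⊕ ℕ)))} with h𝒰def
    have hopenUA : ∀ A : ↥𝒜, IsOpen (UA A) := fun A => isOpenMap_inl _ (psi_open_basic A)
    have hUAmem : ∀ A B : ↥𝒜, Sum.inl (Sum.inl A) ∈ UA B → A = B := by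
      intro A B h
      obtain ⟨w, hw, hwe⟩ := h
      have hw' : w = Sum.inl A := Sum.inl.inj hwe
      subst hw'
      rcases hw with hw | hw
      · exact Sum.inl.inj (Set.mem_singleton_iff.mp hw)
      · exact absurd hw (by simp)
    have hcover : IsOpenCover 𝒰 := by
      constructor
      · rintro V (⟨A, d, rfl⟩ | ⟨A, rfl⟩ | rfl | rfl)
        · refine (hopenUA A).prod ?_
          have h1 : IsOpen ((fun d : D₀ => (d : OnePoint D₀)) '' ({d} : Set D₀)) :=
            OnePoint.isOpen_image_coe.mpr (isOpen_discrete _)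
          have h2 : IsOpen (Sum.inr '' ((fun d : D₀ => (d : OnePoint D₀)) '' ({d} : Set D₀)) :
              Set ((↥𝒜 ⊕ ℕ) ⊕ OnePoint D₀)) := isOpenMap_inr _ h1
          rwa [Set.image_singleton, Set.image_singleton] at h2
        · exact (hopenUA A).prod (isOpenMap_inr _ isClosed_singleton.isOpen_compl)
        · exact ((isOpenMap_inl _ psi_open_nat).union (isOpenMap_inr _ isOpen_univ)).prod
            (isOpenMap_inr _ isOpen_univ)
        · exact isOpen_univ.prod (isOpenMap_inl _ isOpen_univ)
      · apply Set.eq_univ_of_forall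
        rintro ⟨x, (w | (_ | d))⟩
        · exact ⟨(univ : Set _) ×ˢ (Sum.inl '' (univ : Set (↥𝒜 ⊕ ℕ))),
            Or.inr (Or.inr (Or.inr rfl)), ⟨trivial, ⟨w, trivial, rfl⟩⟩⟩
        · rcases x with (A | n) | w
          · refine ⟨UA A ×ˢ (Sum.inr '' ({((f A : D₀) : OnePoint D₀)}ᶜ)),
              Or.inr (Or.inl ⟨A, rfl⟩), ⟨⟨Sum.inl A, Or.inl rfl, rfl⟩, ⟨∞, ?_, rfl⟩⟩⟩
            simp
          · exact ⟨TT ×ˢ (Sum.inr '' (univ : Set (OnePoint D₀))),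
              Or.inr (Or.inr (Or.inl rfl)),
              ⟨Or.inl ⟨Sum.inr n, ⟨n, trivial, rfl⟩, rfl⟩, ⟨∞, trivial, rfl⟩⟩⟩
          · exact ⟨TT ×ˢ (Sum.inr '' (univ : Set (OnePoint D₀))),
              Or.inr (Or.inr (Or.inl rfl)),
              ⟨Or.inr ⟨w, trivial, rfl⟩, ⟨∞, trivial, rfl⟩⟩⟩
        · rcases x with (A | n) | w
          · exact ⟨UA A ×ˢ ({Sum.inr ((d : OnePoint D₀))} : Set _),
              Or.inl ⟨A, d, rfl⟩, ⟨⟨Sum.inl A, Or.inl rfl, rfl⟩, rfl⟩⟩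
          · exact ⟨TT ×ˢ (Sum.inr '' (univ : Set (OnePoint D₀))),
              Or.inr (Or.inr (Or.inl rfl)),
              ⟨Or.inl ⟨Sum.inr n, ⟨n, trivial, rfl⟩, rfl⟩, ⟨(d : OnePoint D₀), trivial, rfl⟩⟩⟩
          · exact ⟨TT ×ˢ (Sum.inr '' (univ : Set (OnePoint D₀))),
              Or.inr (Or.inr (Or.inl rfl)),
              ⟨Or.inr ⟨w, trivial, rfl⟩, ⟨(d : OnePoint D₀), trivial, rfl⟩⟩⟩
    have hkey : ∀ (A : ↥𝒜) (V : Set (((↥𝒜 ⊕ ℕ) ⊕ OnePoint D₀) × ((↥𝒜 ⊕ ℕ) ⊕ OnePoint D₀))),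
        V ∈ 𝒰 → (Sum.inl (Sum.inl A), Sum.inr ((f A : D₀) : OnePoint D₀)) ∈ V →
        V ⊆ (univ : Set _) ×ˢ ({Sum.inr ((f A : D₀) : OnePoint D₀)} : Set _) := by
      rintro A V (⟨B, d, rfl⟩ | ⟨B, rfl⟩ | rfl | rfl) hp
      · have hd : (Sum.inr ((f A : D₀) : OnePoint D₀) :
            (↥𝒜 ⊕ ℕ) ⊕ OnePoint D₀) = Sum.inr ((d : OnePoint D₀)) :=
          Set.mem_singleton_iff.mp hp.2
        rintro ⟨u, v⟩ ⟨-, hv⟩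
        refine ⟨trivial, ?_⟩
        rw [Set.mem_singleton_iff] at hv ⊢
        rw [hv, ← hd]
      · exfalso
        have hAB : A = B := hUAmem A B hp.1
        subst hAB
        obtain ⟨y, hy, hye⟩ := hp.2
        have : y = ((f A : D₀) : OnePoint D₀) := Sum.inr.inj hye
        exact hy (this ▸ rfl)
      · exfalso
        rcases hp.1 with ⟨w, ⟨n, -, hn⟩, he⟩ | ⟨w, -, he⟩
        · have hw : w = Sum.inl A := Sum.inl.inj he
          rw [← hn] at hw
          exact absurd hw (by simp)
        · exact absurd he (by simp)
      · exfalso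
        obtain ⟨w, -, he⟩ := hp.2
        exact absurd he (by simp)
    have hgt : ∀ κ : Cardinal,
        (∀ 𝒰' : Set (Set (((↥𝒜 ⊕ ℕ) ⊕ OnePoint D₀) × ((↥𝒜 ⊕ ℕ) ⊕ OnePoint D₀))),
          IsOpenCover 𝒰' → ∃ S : Set ((↥𝒜 ⊕ ℕ) ⊕ OnePoint D₀),
            Cardinal.mk ↥S ≤ κ ∧ st (Set.univ ×ˢ S) 𝒰' = Set.univ) →
        Cardinal.aleph0 < κ := by
      intro κ hκ
      by_contra hc
      push_neg at hc
      obtain ⟨S, hScard, hSst⟩ := hκ 𝒰 hcover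
      have hmemS : ∀ A : ↥𝒜, (Sum.inr ((f A : D₀) : OnePoint D₀) :
          (↥𝒜 ⊕ ℕ) ⊕ OnePoint D₀) ∈ S := by
        intro A
        have hp : (Sum.inl (Sum.inl A), Sum.inr ((f A : D₀) : OnePoint D₀)) ∈
            st (Set.univ ×ˢ S) 𝒰 := by rw [hSst]; trivial
        obtain ⟨V, ⟨hV𝒰, hVne⟩, hpV⟩ := hp
        obtain ⟨⟨u, v⟩, hv1, hv2⟩ := hVne
        have hmem2 := hkey A V hV𝒰 hpV hv1
        have hv : v = Sum.inr ((f A : D₀) : OnePoint D₀) := Set.mem_singleton_iff.mp hmem2.2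
        rw [← hv]
        exact hv2.2
      have hinj : Function.Injective
          (fun A : ↥𝒜 => (⟨Sum.inr ((f A : D₀) : OnePoint D₀), hmemS A⟩ : ↥S)) := by
        intro A B h
        apply f.injective
        have h2 := congrArg Subtype.val h
        simp only [Sum.inr.injEq] at h2
        exact Option.some.inj h2
      have hcontra : Cardinal.continuum ≤ Cardinal.aleph0 := by
        calc Cardinal.continuum = Cardinal.mk ↥𝒜 := hcard.symm
          _ ≤ Cardinal.mk ↥S := Cardinal.mk_le_of_injective hinj
          _ ≤ κ := hScard
          _ ≤ Cardinal.aleph0 := hc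
      exact absurd hcontra (not_le.mpr Cardinal.aleph0_lt_continuum)
    have hSne : ∀ 𝒰' : Set (Set (((↥𝒜 ⊕ ℕ) ⊕ OnePoint D₀) × ((↥𝒜 ⊕ ℕ) ⊕ OnePoint D₀))),
        IsOpenCover 𝒰' → ∃ S : Set ((↥𝒜 ⊕ ℕ) ⊕ OnePoint D₀),
          Cardinal.mk ↥S ≤ Cardinal.mk ((↥𝒜 ⊕ ℕ) ⊕ OnePoint D₀) ∧
          st (Set.univ ×ˢ S) 𝒰' = Set.univ := by
      rintro 𝒱 ⟨hop, hcov⟩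
      refine ⟨Set.univ, Cardinal.mk_univ.le, ?_⟩
      apply Set.eq_univ_of_forall
      intro z
      have hz : z ∈ ⋃₀ 𝒱 := by rw [hcov]; trivial
      obtain ⟨V, hV, hzV⟩ := hz
      exact ⟨V, ⟨hV, ⟨z, hzV, ⟨trivial, trivial⟩⟩⟩, hzV⟩
    simp only [weakDoubleExtent]
    refine lt_of_lt_of_le (hgt _ ?_) le_sup_right
    exact csInf_mem (s := {κ : Cardinal |
      ∀ 𝒰' : Set (Set (((↥𝒜 ⊕ ℕ) ⊕ OnePoint D₀) × ((↥𝒜 ⊕ ℕ) ⊕ OnePoint D₀))),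
        IsOpenCover 𝒰' → ∃ A : Set ((↥𝒜 ⊕ ℕ) ⊕ OnePoint D₀),
          Cardinal.mk ↥A ≤ κ ∧ st (Set.univ ×ˢ A) 𝒰' = Set.univ}) ⟨_, hSne⟩

end DiagonalPaper
end

section
/- If X is a Hausdorff Baire space with a rank 2-diagonal, then |X| ≤ we(X)^ω · wL(X)^ω; in particular combining we(X) ≤ d(X) ≤ wL(X)^ω yields |X| ≤ wL(X)^ω for such X. -/
open Set Topology

universe u

namespace DiagonalPaper

lemma stn_two_eq {X : Type u} (A : Set X) (𝒰 : Set (Set X)) :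
    stn 2 A 𝒰 = st (st A 𝒰) 𝒰 := rfl

lemma mem_stn_two {X : Type u} {x y : X} {𝒰 : Set (Set X)} {U V : Set X}
    (hU : U ∈ 𝒰) (hV : V ∈ 𝒰) (hxU : x ∈ U) (hyV : y ∈ V)
    (hz : (U ∩ V).Nonempty) : y ∈ stn 2 {x} 𝒰 := by
  rw [stn_two_eq]
  obtain ⟨z, hzU, hzV⟩ := hz
  have hzst : z ∈ st ({x} : Set X) 𝒰 := ⟨U, ⟨hU, ⟨x, hxU, rfl⟩⟩, hzU⟩
  exact ⟨V, ⟨hV, ⟨z, hzV, hzst⟩⟩, hyV⟩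

/-- if `X` is a Hausdorff Baire space with a rank 2-diagonal, then
`|X| ≤ we(X)^ω · wL(X)^ω`, and in particular `|X| ≤ wL(X)^ω`. -/
theorem card_le_weakExtent_pow_mul_weakLindelof_pow
    (X : Type u) [TopologicalSpace X] [T2Space X] [BaireSpace X]
    (h : HasRankNDiagonal X 2) :
    Cardinal.mk X ≤ weakExtent X ^ Cardinal.aleph0 * weakLindelof X ^ Cardinal.aleph0 ∧
    Cardinal.mk X ≤ weakLindelof X ^ Cardinal.aleph0 := by
  obtain ⟨𝒰, hcov, hsep⟩ := h
  -- extract small subfamilies with dense union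
  have hS : ∀ n, ∃ 𝒱 ⊆ 𝒰 n, Cardinal.mk ↥𝒱 ≤ weakLindelof X ∧ Dense (⋃₀ 𝒱) := by
    intro n
    have hne : {κ | ∀ 𝒲 : Set (Set X), IsOpenCover 𝒲 →
        ∃ 𝒱 ⊆ 𝒲, Cardinal.mk ↥𝒱 ≤ κ ∧ Dense (⋃₀ 𝒱)}.Nonempty := by
      refine ⟨Cardinal.mk (Set X), fun 𝒲 h𝒲 => ⟨𝒲, subset_rfl, Cardinal.mk_subtype_le _, ?_⟩⟩
      rw [h𝒲.2]; exact dense_univ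
    obtain ⟨𝒱, h1, h2, h3⟩ := csInf_mem hne (𝒰 n) (hcov n)
    exact ⟨𝒱, h1, h2.trans le_sup_right, h3⟩
  choose 𝒱 hsub hcard hdense using hS
  have hDopen : ∀ n, IsOpen (⋃₀ 𝒱 n) :=
    fun n => isOpen_sUnion fun U hU => (hcov n).1 U (hsub n hU)
  have hD : Dense (⋂ n, ⋃₀ 𝒱 n) := dense_iInter_of_isOpen hDopen hdense
  set D : Set X := ⋂ n, ⋃₀ 𝒱 n with hDdef
  -- injection D → ∏ 𝒱 n
  set T : Set (Set X) := ⋃ i : ULift.{u} ℕ, 𝒱 i.down with hTdef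
  have hVmem : ∀ (x : ↥D) (n : ℕ), ∃ V, V ∈ 𝒱 n ∧ (x : X) ∈ V := by
    intro x n
    obtain ⟨V, hV, hxV⟩ := mem_iInter.1 x.2 n
    exact ⟨V, hV, hxV⟩
  choose Vf hVf1 hVf2 using hVmem
  have hDinj : Function.Injective (fun (x : ↥D) (n : ℕ) =>
      (⟨Vf x n, mem_iUnion.2 ⟨ULift.up n, hVf1 x n⟩⟩ : ↥T)) := by
    intro x y hxy
    by_contra hne
    have hxyv : (x : X) ≠ (y : X) := fun hv => hne (Subtype.ext hv)
    obtain ⟨k, hk⟩ := hsep x y hxyv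
    have heq : Vf x k = Vf y k := congrArg Subtype.val (congrFun hxy k)
    exact hk (mem_stn_two (hsub k (hVf1 x k)) (hsub k (hVf1 y k)) (hVf2 x k)
      (heq ▸ hVf2 y k) ⟨x, hVf2 x k, heq ▸ hVf2 x k⟩)
  have hcardT : Cardinal.mk ↥T ≤ weakLindelof X := by
    have h1 : Cardinal.mk ↥T ≤ Cardinal.sum fun i : ULift.{u} ℕ => Cardinal.mk ↥(𝒱 i.down) :=
      Cardinal.mk_iUnion_le_sum_mk
    have h2 : (Cardinal.sum fun i : ULift.{u} ℕ => Cardinal.mk ↥(𝒱 i.down)) ≤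
        Cardinal.sum fun _ : ULift.{u} ℕ => weakLindelof X :=
      Cardinal.sum_le_sum _ _ fun i => hcard i.down
    have h3 : (Cardinal.sum fun _ : ULift.{u} ℕ => weakLindelof X) =
        Cardinal.aleph0 * weakLindelof X := by
      rw [Cardinal.sum_const']; simp
    calc Cardinal.mk ↥T ≤ Cardinal.aleph0 * weakLindelof X := by
          rw [← h3]; exact h1.trans h2
      _ ≤ weakLindelof X * weakLindelof X :=
          mul_le_mul_left le_sup_left _
      _ = weakLindelof X := Cardinal.mul_eq_self le_sup_left
  have hcardD : Cardinal.mk ↥D ≤ weakLindelof X ^ Cardinal.aleph0 := by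
    calc Cardinal.mk ↥D ≤ Cardinal.mk (ℕ → ↥T) := Cardinal.mk_le_of_injective hDinj
      _ = Cardinal.mk ↥T ^ Cardinal.aleph0 := by
          rw [Cardinal.mk_arrow]; simp
      _ ≤ weakLindelof X ^ Cardinal.aleph0 :=
          Cardinal.power_le_power_right hcardT
  -- injection X → (ℕ → D)
  have hdmem : ∀ (x : X) (n : ℕ), ∃ d : ↥D, ∃ U ∈ 𝒰 n, x ∈ U ∧ (d : X) ∈ U := by
    intro x n
    have hx : x ∈ ⋃₀ 𝒰 n := by rw [(hcov n).2]; trivial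
    obtain ⟨U, hU, hxU⟩ := hx
    obtain ⟨d, hdD, hdU⟩ := hD.exists_mem_open ((hcov n).1 U hU) ⟨x, hxU⟩
    exact ⟨⟨d, hdD⟩, U, hU, hxU, hdU⟩
  choose df Uf hUf1 hUf2 hUf3 using hdmem
  have hXinj : Function.Injective df := by
    intro x y hxy
    by_contra hne
    obtain ⟨k, hk⟩ := hsep x y hne
    have heq : (df x k : X) = (df y k : X) := by rw [hxy]
    exact hk (mem_stn_two (hUf1 x k) (hUf1 y k) (hUf2 x k) (hUf2 y k)
      ⟨df x k, hUf3 x k, heq ▸ hUf3 y k⟩)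
  have hX : Cardinal.mk X ≤ weakLindelof X ^ Cardinal.aleph0 := by
    calc Cardinal.mk X ≤ Cardinal.mk (ℕ → ↥D) := Cardinal.mk_le_of_injective hXinj
      _ = Cardinal.mk ↥D ^ Cardinal.aleph0 := by rw [Cardinal.mk_arrow]; simp
      _ ≤ (weakLindelof X ^ Cardinal.aleph0) ^ Cardinal.aleph0 :=
          Cardinal.power_le_power_right hcardD
      _ = weakLindelof X ^ Cardinal.aleph0 := by
          rw [← Cardinal.power_mul, Cardinal.aleph0_mul_aleph0]
  refine ⟨?_, hX⟩
  have h1 : (1 : Cardinal.{u}) ≤ weakExtent X ^ Cardinal.aleph0 := by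
    have : (1 : Cardinal.{u}) ≤ weakExtent X :=
      le_trans Cardinal.one_le_aleph0 le_sup_left
    calc (1 : Cardinal.{u}) = 1 ^ Cardinal.aleph0 := (Cardinal.one_power).symm
      _ ≤ weakExtent X ^ Cardinal.aleph0 := Cardinal.power_le_power_right this
  calc Cardinal.mk X ≤ weakLindelof X ^ Cardinal.aleph0 := hX
    _ = 1 * weakLindelof X ^ Cardinal.aleph0 := (one_mul _).symm
    _ ≤ weakExtent X ^ Cardinal.aleph0 * weakLindelof X ^ Cardinal.aleph0 :=
        mul_le_mul_left h1 _

end DiagonalPaper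
end
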